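/- arXiv:1312.4973 — 5 statements merged into one kernel-verified Lean document; each statement's English description precedes it below -/
import Mathlib

section
/- For every integer n ≥ 6, the metric dimension of the Johnson graph J(n,2) equals (2/3)(n − i) + i, where i ∈ {0,1,2} is the residue of n modulo 3 (i.e. it equals 2(n − (n mod 3))/3 + (n mod 3)). -/
/-- `S` is a resolving set for the graph `G`: every pair of distinct vertices is
resolved by some vertex of `S` (via the geodesic distance `SimpleGraph.dist`). -/
def IsResolvingSet {V : Type*} (G : SimpleGraph V) (S : Set V) : Prop :=
  ∀ u w : V, u ≠ w → ∃ v ∈ S, G.dist u v ≠ G.dist w v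

/-- The metric dimension of `G`: the smallest size of a resolving set. -/
noncomputable def metricDim {V : Type*} (G : SimpleGraph V) : ℕ :=
  sInf {n : ℕ | ∃ S : Finset V, IsResolvingSet G (↑S) ∧ S.card = n}

/-- The Johnson graph `J(n,2)`: vertices are the 2-element subsets of an
`n`-element set, adjacent when they meet in exactly one element. -/
def johnsonGraph2 (n : ℕ) : SimpleGraph {s : Finset (Fin n) // s.card = 2} where
  Adj a b := ((a : Finset (Fin n)) ∩ (b : Finset (Fin n))).card = 1
  symm := ⟨fun a b h => by
    change ((a : Finset (Fin n)) ∩ (b : Finset (Fin n))).card = 1 at h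
    change ((b : Finset (Fin n)) ∩ (a : Finset (Fin n))).card = 1
    rwa [Finset.inter_comm]⟩
  loopless := ⟨fun a h => by
    change ((a : Finset (Fin n)) ∩ (a : Finset (Fin n))).card = 1 at h
    rw [Finset.inter_self, a.2] at h
    omega⟩

/-!
In `J(n,2)` distinct pairs are at distance 1 when they meet and 2 when they are disjoint, so `S`
resolves exactly when every pair outside `S` is determined by the members of `S` it meets. Read
`S` as the edge set of a graph on the `n` points: the pair `{a, b}` meets the edges at `a` or `b`.
This forbids two isolated points and an isolated edge, and, once some point is isolated, also a
point of degree 2 whose neighbours are leaves and an isolated path on four points. Each leaf then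
owns its edge, and with an isolated point each point of degree 2 lies on an edge without leaves;
counting degrees gives `3|S| ≥ 2n`, i.e. `|S| ≥ n - ⌊n/3⌋`. Conversely, `⌊n/3⌋` stars covering
the points, each with at least two leaves, resolve and have `n - ⌊n/3⌋` edges.
-/

open Finset

namespace Johnson

section Counting

variable {α : Type*} [Fintype α]

lemma card_filter_partition (f : α → ℕ) :
    #{x | f x = 0} + #{x | f x = 1} + #{x | f x = 2} + #{x | 3 ≤ f x} = Fintype.card α := by
  simp only [card_filter]
  rw [← sum_add_distrib, ← sum_add_distrib, ← sum_add_distrib, Fintype.card_eq_sum_ones]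
  refine sum_congr rfl fun x _ => ?_
  split_ifs <;> omega

lemma card_filter_weighted_le_sum (f : α → ℕ) :
    #{x | f x = 1} + 2 * #{x | f x = 2} + 3 * #{x | 3 ≤ f x} ≤ ∑ x, f x := by
  simp only [card_filter, mul_sum, ← sum_add_distrib]
  refine sum_le_sum fun x _ => ?_
  split_ifs <;> omega

end Counting

variable {α : Type*} [DecidableEq α]

abbrev Pair (α : Type*) := {s : Finset α // s.card = 2}

def pair (a b : α) (h : a ≠ b) : Pair α := ⟨{a, b}, card_pair h⟩

@[simp] lemma coe_pair {a b : α} (h : a ≠ b) : (pair a b h).1 = {a, b} := rfl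

lemma pair_comm {a b : α} (h : a ≠ b) : pair a b h = pair b a h.symm :=
  Subtype.ext (Finset.pair_comm a b)

lemma Pair.exists_eq_pair_of_mem {u : Pair α} {a : α} (ha : a ∈ u.1) :
    ∃ b, ∃ h : a ≠ b, u = pair a b h := by
  obtain ⟨x, y, hxy, hu⟩ := card_eq_two.1 u.2
  rw [hu, mem_insert, mem_singleton] at ha
  rcases ha with rfl | rfl
  · exact ⟨y, hxy, Subtype.ext hu⟩
  · exact ⟨x, hxy.symm, Subtype.ext (hu.trans (Finset.pair_comm _ _))⟩

lemma Pair.exists_eq_pair (u : Pair α) : ∃ a b, ∃ h : a ≠ b, u = pair a b h := by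
  obtain ⟨a, ha⟩ := card_pos.1 (by rw [u.2]; norm_num : 0 < #u.1)
  exact ⟨a, Pair.exists_eq_pair_of_mem ha⟩

lemma Pair.eq_of_two_le_card_inter {u w : Pair α} (h : 2 ≤ #(u.1 ∩ w.1)) : u = w := by
  have hu := eq_of_subset_of_card_le (inter_subset_left (s₁ := u.1) (s₂ := w.1)) (by omega)
  have hw := eq_of_subset_of_card_le (inter_subset_right (s₁ := u.1) (s₂ := w.1)) (by omega)
  exact Subtype.ext (hu.symm.trans hw)

lemma johnsonGraph2_dist_of_ne {n : ℕ} {u w : Pair (Fin n)} (hne : u ≠ w) :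
    (johnsonGraph2 n).dist u w = if Disjoint u.1 w.1 then 2 else 1 := by
  have hadj : (johnsonGraph2 n).Adj u w ↔ #(u.1 ∩ w.1) = 1 := Iff.rfl
  split_ifs with hdisj
  · obtain ⟨a, ha⟩ := card_pos.1 (by rw [u.2]; norm_num)
    obtain ⟨c, hc⟩ := card_pos.1 (by rw [w.2]; norm_num)
    have hac : a ≠ c := fun h => disjoint_left.1 hdisj ha (h ▸ hc)
    have hmid : pair a c hac ∈ (johnsonGraph2 n).commonNeighbors u w := by
      refine (SimpleGraph.mem_commonNeighbors _).2 ⟨?_, ?_⟩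
      · show #(u.1 ∩ {a, c}) = 1
        rw [inter_insert_of_mem ha, inter_singleton_of_notMem (disjoint_right.1 hdisj hc)]
        rfl
      · show #(w.1 ∩ {a, c}) = 1
        rw [inter_insert_of_notMem (disjoint_left.1 hdisj ha), inter_singleton_of_mem hc]
        rfl
    have hnadj : ¬(johnsonGraph2 n).Adj u w := by
      rw [hadj, disjoint_iff_inter_eq_empty.1 hdisj]
      simp
    simp [SimpleGraph.dist, SimpleGraph.edist_eq_two_iff.2 ⟨hne, hnadj, ⟨_, hmid⟩⟩]
  · rw [SimpleGraph.dist_eq_one_iff_adj, hadj]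
    have hpos : 0 < #(u.1 ∩ w.1) := card_pos.2 (not_disjoint_iff_nonempty_inter.1 hdisj)
    have hle : #(u.1 ∩ w.1) ≤ #u.1 := card_le_card inter_subset_left
    have hne2 : #(u.1 ∩ w.1) ≠ 2 := fun h => hne (Pair.eq_of_two_le_card_inter h.ge)
    have := u.2
    omega

def edgesAt (S : Finset (Pair α)) (x : α) : Finset (Pair α) := {v ∈ S | x ∈ v.1}

def edgesMeeting (S : Finset (Pair α)) (s : Finset α) : Finset (Pair α) :=
  {v ∈ S | ¬Disjoint s v.1}

def deg (S : Finset (Pair α)) (x : α) : ℕ := #(edgesAt S x)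

def Resolves (S : Finset (Pair α)) : Prop :=
  Set.InjOn (fun u : Pair α => edgesMeeting S u.1) (↑S)ᶜ

lemma edgesMeeting_pair (S : Finset (Pair α)) (a b : α) :
    edgesMeeting S {a, b} = edgesAt S a ∪ edgesAt S b := by
  ext v
  simp only [edgesMeeting, edgesAt, mem_filter, mem_union, disjoint_insert_left,
    disjoint_singleton_left]
  tauto

lemma sum_deg_eq_sum_card_inter (T : Finset (Pair α)) (X : Finset α) :
    ∑ x ∈ X, deg T x = ∑ v ∈ T, #(X ∩ v.1) := by
  simpa [deg, edgesAt, bipartiteAbove, bipartiteBelow, filter_mem_eq_inter] using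
    sum_card_bipartiteAbove_eq_sum_card_bipartiteBelow (s := X) (t := T)
      (r := fun x v => x ∈ v.1)

lemma sum_deg [Fintype α] (S : Finset (Pair α)) : ∑ x, deg S x = 2 * #S := by
  rw [sum_deg_eq_sum_card_inter]
  simp only [univ_inter]
  rw [sum_congr rfl fun v _ => v.2, sum_const, smul_eq_mul, mul_comm]

lemma card_edgesMeeting_add (S : Finset (Pair α)) (s : Finset α) :
    #(edgesMeeting S s) + #{v ∈ S | Disjoint s v.1} = #S :=
  (add_comm _ _).trans (card_filter_add_card_filter_not _)

theorem isResolvingSet_johnsonGraph2_iff {n : ℕ} {S : Finset (Pair (Fin n))} :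
    IsResolvingSet (johnsonGraph2 n) ↑S ↔ Resolves S := by
  have hdist : ∀ {u v : Pair (Fin n)}, v ∈ S → u ∉ S →
      (johnsonGraph2 n).dist u v = if Disjoint u.1 v.1 then 2 else 1 :=
    fun hv hu => johnsonGraph2_dist_of_ne fun h => hu (h ▸ hv)
  constructor
  · intro hS u hu w hw huw
    by_contra hne
    obtain ⟨v, hv, hd⟩ := hS u w hne
    have hvu := congrArg (v ∈ ·) huw
    simp only [edgesMeeting, mem_filter, eq_iff_iff] at hvu
    rw [hdist hv hu, hdist hv hw] at hd
    split_ifs at hd <;> tauto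
  · intro hS u w hne
    by_contra! hd
    have hu : u ∉ S := fun hu => by
      have h := hd u hu
      rw [SimpleGraph.dist_self, johnsonGraph2_dist_of_ne hne.symm] at h
      split_ifs at h
    have hw : w ∉ S := fun hw => by
      have h := hd w hw
      rw [SimpleGraph.dist_self, johnsonGraph2_dist_of_ne hne] at h
      split_ifs at h
    refine hne (hS hu hw (Finset.ext fun v => ?_))
    simp only [edgesMeeting, mem_filter, and_congr_right_iff]
    intro hv
    have h := hd v hv
    rw [hdist hv hu, hdist hv hw] at h
    split_ifs at h <;> tauto

variable {S : Finset (Pair α)}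

@[simp] lemma mem_edgesAt {x : α} {v : Pair α} : v ∈ edgesAt S x ↔ v ∈ S ∧ x ∈ v.1 :=
  mem_filter

lemma deg_pos {x : α} {v : Pair α} (hv : v ∈ edgesAt S x) : 0 < deg S x :=
  card_pos.2 ⟨v, hv⟩

lemma edgesAt_eq_singleton {x : α} {v : Pair α} (h : deg S x ≤ 1)
    (hv : v ∈ edgesAt S x) : edgesAt S x = {v} :=
  eq_singleton_iff_unique_mem.2 ⟨hv, fun _ hw => card_le_one.1 h _ hw _ hv⟩

lemma edgesAt_eq_pair {x : α} {v w : Pair α} (h : deg S x ≤ 2) (hv : v ∈ edgesAt S x)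
    (hw : w ∈ edgesAt S x) (hvw : v ≠ w) : edgesAt S x = {v, w} :=
  (eq_of_subset_of_card_le (insert_subset hv (singleton_subset_iff.2 hw))
    (by rw [card_pair hvw]; exact h)).symm

lemma exists_edgesAt_eq_pair {x y : α} {hxy : x ≠ y} (h : deg S x = 2)
    (hv : pair x y hxy ∈ S) :
    ∃ z, ∃ hxz : x ≠ z, z ≠ y ∧ edgesAt S x = {pair x y hxy, pair x z hxz} := by
  have hvx : pair x y hxy ∈ edgesAt S x := mem_edgesAt.2 ⟨hv, by simp⟩
  have h' : #(edgesAt S x) = 2 := h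
  obtain ⟨w, hw⟩ := card_pos.1 (by rw [card_erase_of_mem hvx]; omega :
    0 < #((edgesAt S x).erase (pair x y hxy)))
  obtain ⟨hwv, hwx⟩ := mem_erase.1 hw
  obtain ⟨z, hxz, rfl⟩ := Pair.exists_eq_pair_of_mem (mem_edgesAt.1 hwx).2
  refine ⟨z, hxz, fun hzy => hwv (by simp [hzy]), edgesAt_eq_pair h.le hvx hwx (Ne.symm hwv)⟩

lemma pair_notMem {a b : α} {hab : a ≠ b} (h : ∀ v ∈ edgesAt S a, b ∉ v.1) :
    pair a b hab ∉ S :=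
  fun hm => h _ (mem_edgesAt.2 ⟨hm, by simp⟩) (by simp)

lemma Resolves.eq_or_eq (hS : Resolves S) {a b p q : α} {hab : a ≠ b} {hpq : p ≠ q}
    (hu : pair a b hab ∉ S) (hw : pair p q hpq ∉ S)
    (h : edgesAt S a ∪ edgesAt S b = edgesAt S p ∪ edgesAt S q) : a = p ∨ a = q := by
  have huw := congrArg Subtype.val <| hS hu hw <| by
    simpa only [coe_pair, edgesMeeting_pair] using h
  have ha : a ∈ (pair p q hpq).1 := huw ▸ (by simp : a ∈ (pair a b hab).1)
  simpa using ha

lemma Resolves.exists_pair_mem_two_le_deg (hS : Resolves S) {x₀ b : α} (hx₀ : deg S x₀ = 0)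
    (hb : deg S b = 2) : ∃ p, ∃ hbp : b ≠ p, pair b p hbp ∈ S ∧ 2 ≤ deg S p := by
  by_contra! hsmall
  obtain ⟨v, hv⟩ := card_pos.1 (by rw [← deg, hb]; norm_num : 0 < #(edgesAt S b))
  obtain ⟨a, hba, rfl⟩ := Pair.exists_eq_pair_of_mem (mem_edgesAt.1 hv).2
  obtain ⟨c, hbc, hca, hEb⟩ := exists_edgesAt_eq_pair hb (mem_edgesAt.1 hv).1
  have hc : pair b c hbc ∈ S := (mem_edgesAt.1 (hEb ▸ by simp : pair b c hbc ∈ edgesAt S b)).1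
  have hEa := edgesAt_eq_singleton (by have := hsmall a hba (mem_edgesAt.1 hv).1; omega)
    (mem_edgesAt.2 ⟨(mem_edgesAt.1 hv).1, by simp⟩ : pair b a hba ∈ edgesAt S a)
  have hEc := edgesAt_eq_singleton (by have := hsmall c hbc hc; omega)
    (mem_edgesAt.2 ⟨hc, by simp⟩ : pair b c hbc ∈ edgesAt S c)
  -- `{x₀, b}` and `{a, c}` meet the same two edges `{b, a}` and `{b, c}`.
  have hx₀b : x₀ ≠ b := by rintro rfl; omega
  have hE₀ : edgesAt S x₀ = ∅ := card_eq_zero.1 hx₀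
  have := hS.eq_or_eq (hab := hx₀b) (hpq := hca.symm) (pair_notMem (by simp [hE₀]))
    (pair_notMem (by simp [hEa, hca, hbc.symm])) (by rw [hE₀, hEb, hEa, hEc]; rfl)
  rcases this with rfl | rfl
  · simp [deg, hEa] at hx₀
  · simp [deg, hEc] at hx₀

lemma Resolves.not_path_component (hS : Resolves S) {a p q b : α} {hap : a ≠ p}
    {hpq : p ≠ q} {hqb : q ≠ b} (hab : a ≠ b) (h₁ : pair a p hap ∈ S) (h₂ : pair p q hpq ∈ S)
    (h₃ : pair q b hqb ∈ S) (ha : deg S a = 1) (hp : deg S p = 2) (hq : deg S q = 2)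
    (hb : deg S b = 1) : False := by
  have hpb : p ≠ b := by rintro rfl; omega
  have haq : a ≠ q := by rintro rfl; omega
  have hEa := edgesAt_eq_singleton ha.le (mem_edgesAt.2 ⟨h₁, by simp⟩)
  have hEb := edgesAt_eq_singleton hb.le (mem_edgesAt.2 ⟨h₃, by simp⟩)
  have hEp := edgesAt_eq_pair hp.le (mem_edgesAt.2 ⟨h₁, by simp⟩)
    (mem_edgesAt.2 ⟨h₂, by simp⟩) fun h => by
      simpa [haq.symm, hpq.symm] using congrArg (q ∈ ·.1) h
  have hEq := edgesAt_eq_pair hq.le (mem_edgesAt.2 ⟨h₂, by simp⟩)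
    (mem_edgesAt.2 ⟨h₃, by simp⟩) fun h => by simpa [hpq, hpb] using congrArg (p ∈ ·.1) h
  -- `{a, q}` and `{p, b}` meet the same three edges.
  have := hS.eq_or_eq (hab := haq) (hpq := hpb)
    (pair_notMem (by simp [hEa, haq.symm, hpq.symm]))
    (pair_notMem (by simp [hEp, hab.symm, hpb.symm, hqb.symm]))
    (by rw [hEa, hEp, hEq, hEb]; ext; simp; tauto)
  exact this.elim hap hab

lemma exists_ne_ne [Fintype α] (hα : 3 ≤ Fintype.card α) (x y : α) :
    ∃ z, z ≠ x ∧ z ≠ y := by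
  obtain ⟨z, -, hz⟩ := exists_mem_notMem_of_card_lt_card (s := {x, y}) (t := univ)
    (card_le_two.trans_lt (by rw [card_univ]; omega))
  simp only [mem_insert, mem_singleton, not_or] at hz
  exact ⟨z, hz⟩

section

variable [Fintype α]

lemma Resolves.card_deg_eq_zero_le_one (hS : Resolves S) (hα : 3 ≤ Fintype.card α) :
    #{x | deg S x = 0} ≤ 1 := by
  refine card_le_one.2 fun x hx y hy => by_contra fun hxy => ?_
  simp only [mem_filter, mem_univ, true_and, deg, card_eq_zero] at hx hy
  obtain ⟨z, hzx, hzy⟩ := exists_ne_ne hα x y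
  have := hS.eq_or_eq (hab := hzx.symm) (hpq := hzy.symm) (pair_notMem (by simp [hx]))
    (pair_notMem (by simp [hy])) (by rw [hx, hy])
  exact this.elim hxy hzx.symm

lemma Resolves.deg_ne_one (hS : Resolves S) (hα : 3 ≤ Fintype.card α) {x y : α}
    {hxy : x ≠ y} (hv : pair x y hxy ∈ S) (hx : deg S x = 1) : deg S y ≠ 1 := by
  intro hy
  have hEx := edgesAt_eq_singleton hx.le (mem_edgesAt.2 ⟨hv, by simp⟩)
  have hEy := edgesAt_eq_singleton hy.le (mem_edgesAt.2 ⟨hv, by simp⟩)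
  obtain ⟨z, hzx, hzy⟩ := exists_ne_ne hα x y
  have := hS.eq_or_eq (hab := hzx.symm) (hpq := hzy.symm)
    (pair_notMem (by simp [hEx, hzx, hzy])) (pair_notMem (by simp [hEy, hzx, hzy]))
    (by rw [hEx, hEy])
  exact this.elim hxy hzx.symm

lemma Resolves.exists_deg_eq_two (hS : Resolves S) (hα : 3 ≤ Fintype.card α) {x₀ : α}
    (hx₀ : deg S x₀ = 0) (hmax : ∀ x, deg S x ≤ 2) : ∃ b, deg S b = 2 := by
  obtain ⟨y, hyx₀, -⟩ := exists_ne_ne hα x₀ x₀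
  have hy : deg S y ≠ 0 := fun hy =>
    hyx₀ (card_le_one.1 (hS.card_deg_eq_zero_le_one hα) y (by simpa using hy) x₀ (by simpa))
  by_cases hy2 : deg S y = 2
  · exact ⟨y, hy2⟩
  obtain ⟨v, hv⟩ := card_pos.1 (Nat.pos_of_ne_zero hy)
  obtain ⟨z, hyz, rfl⟩ := Pair.exists_eq_pair_of_mem (mem_edgesAt.1 hv).2
  have hz := deg_pos (mem_edgesAt.2 ⟨(mem_edgesAt.1 hv).1, by simp⟩ : _ ∈ edgesAt S z)
  have := hS.deg_ne_one hα (mem_edgesAt.1 hv).1 (by have := hmax y; omega)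
  exact ⟨z, by have := hmax z; omega⟩

lemma Resolves.three_le_card_deg_eq_two (hS : Resolves S) (hα : 3 ≤ Fintype.card α)
    {x₀ : α} (hx₀ : deg S x₀ = 0) (hmax : ∀ x, deg S x ≤ 2) : 3 ≤ #{x | deg S x = 2} := by
  obtain ⟨b, hb⟩ := hS.exists_deg_eq_two hα hx₀ hmax
  obtain ⟨p, hbp, hbpS, hp⟩ := hS.exists_pair_mem_two_le_deg hx₀ hb
  replace hp : deg S p = 2 := le_antisymm (hmax p) hp
  obtain ⟨a, hba, hap, hEb⟩ := exists_edgesAt_eq_pair hb hbpS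
  obtain ⟨c, hpc, hcb, hEp⟩ := exists_edgesAt_eq_pair hp ((pair_comm hbp) ▸ hbpS)
  have haS : pair b a hba ∈ S := (mem_edgesAt.1 (hEb ▸ by simp : pair b a hba ∈ edgesAt S b)).1
  have hcS : pair p c hpc ∈ S := (mem_edgesAt.1 (hEp ▸ by simp : pair p c hpc ∈ edgesAt S p)).1
  have ha := deg_pos (mem_edgesAt.2 ⟨haS, by simp⟩ : _ ∈ edgesAt S a)
  have hc := deg_pos (mem_edgesAt.2 ⟨hcS, by simp⟩ : _ ∈ edgesAt S c)
  refine two_lt_card.2 ?_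
  by_cases ha2 : deg S a = 2
  · exact ⟨a, by simpa, b, by simpa, p, by simpa, hba.symm, hap, hbp⟩
  by_cases hc2 : deg S c = 2
  · exact ⟨b, by simpa, p, by simpa, c, by simpa, hbp, hcb.symm, hpc⟩
  have hac : a ≠ c := by
    rintro rfl
    have h₁ := edgesAt_eq_singleton (by have := hmax a; omega)
      (mem_edgesAt.2 ⟨haS, by simp⟩ : _ ∈ edgesAt S a)
    have h₂ : pair p a hpc ∈ edgesAt S a := mem_edgesAt.2 ⟨hcS, by simp⟩
    have hpa : p ∈ (pair b a hba).1 :=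
      mem_singleton.1 (h₁ ▸ h₂) ▸ (by simp : p ∈ (pair p a hpc).1)
    simp [hbp.symm, hap.symm] at hpa
  exact (hS.not_path_component hac ((pair_comm hba) ▸ haS) hbpS hcS
    (by have := hmax a; omega) hb hp (by have := hmax c; omega)).elim

lemma Resolves.card_deg_eq_one_le (hS : Resolves S) (hα : 3 ≤ Fintype.card α) :
    #{x | deg S x = 1} ≤ #(edgesMeeting S {x | deg S x = 1}) := by
  set L : Finset α := {x | deg S x = 1}
  calc #L = ∑ x ∈ L, deg S x := by
        rw [card_eq_sum_ones]; exact sum_congr rfl fun x hx => (mem_filter.1 hx).2.symm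
    _ = ∑ v ∈ S, #(L ∩ v.1) := sum_deg_eq_sum_card_inter S L
    _ ≤ ∑ v ∈ S, if ¬Disjoint L v.1 then 1 else 0 := sum_le_sum fun v hv => ?_
    _ = #(edgesMeeting S L) := (card_filter _ _).symm
  split_ifs with h
  · rw [disjoint_iff_inter_eq_empty.1 h, card_empty]
  · refine card_le_one.2 fun x hx y hy => by_contra fun hxy => ?_
    obtain ⟨hxL, hxv⟩ := mem_inter.1 hx
    obtain ⟨hyL, hyv⟩ := mem_inter.1 hy
    obtain ⟨z, hxz, rfl⟩ := Pair.exists_eq_pair_of_mem hxv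
    obtain rfl : y = z := by simpa [Ne.symm hxy] using hyv
    exact hS.deg_ne_one hα hv (mem_filter.1 hxL).2 (mem_filter.1 hyL).2

lemma Resolves.card_deg_eq_two_le (hS : Resolves S) {x₀ : α} (hx₀ : deg S x₀ = 0) :
    #{x | deg S x = 2} ≤ 2 * #{v ∈ S | Disjoint ({x | deg S x = 1} : Finset α) v.1} := by
  set T : Finset α := {x | deg S x = 2}
  set S' := {v ∈ S | Disjoint ({x | deg S x = 1} : Finset α) v.1} with hS'
  calc #T = ∑ x ∈ T, 1 := card_eq_sum_ones _
    _ ≤ ∑ x ∈ T, deg S' x := sum_le_sum fun b hb => ?_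
    _ = ∑ v ∈ S', #(T ∩ v.1) := sum_deg_eq_sum_card_inter S' T
    _ ≤ ∑ v ∈ S', 2 := sum_le_sum fun v _ => (card_le_card inter_subset_right).trans_eq v.2
    _ = 2 * #S' := by rw [sum_const, smul_eq_mul, mul_comm]
  have hb := (mem_filter.1 hb).2
  obtain ⟨p, hbp, hpS, hp⟩ := hS.exists_pair_mem_two_le_deg hx₀ hb
  refine deg_pos (v := pair b p hbp) (mem_edgesAt.2 ⟨?_, by simp⟩)
  simp only [hS']
  refine mem_filter.2 ⟨hpS, ?_⟩
  simp only [coe_pair, disjoint_insert_right, disjoint_singleton_right, mem_filter, mem_univ,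
    true_and]
  omega

theorem Resolves.two_mul_card_le (hS : Resolves S) (hα : 6 ≤ Fintype.card α) :
    2 * Fintype.card α ≤ 3 * #S := by
  have hpart := card_filter_partition (deg S)
  have hdeg := (card_filter_weighted_le_sum (deg S)).trans_eq (sum_deg S)
  have hZ := hS.card_deg_eq_zero_le_one (by omega)
  have hL := hS.card_deg_eq_one_le (by omega)
  have hsplit := card_edgesMeeting_add S {x | deg S x = 1}
  rcases Nat.eq_zero_or_pos #{x | deg S x = 0} with hZ₀ | hZ₁
  · omega
  -- With an isolated point, a star with three leaves (`n = 5`) is excluded only by `6 ≤ n`.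
  obtain ⟨x₀, hx₀⟩ := card_pos.1 hZ₁
  replace hx₀ : deg S x₀ = 0 := (mem_filter.1 hx₀).2
  have hT := hS.card_deg_eq_two_le hx₀
  have hH : #{x | 3 ≤ deg S x} = 0 → 3 ≤ #{x | deg S x = 2} := fun h =>
    hS.three_le_card_deg_eq_two (by omega) hx₀ fun x => by
      have := filter_eq_empty_iff.1 (card_eq_zero.1 h) (mem_univ x)
      omega
  omega

end

lemma eq_of_mem_insert_apply {c : α → α} (hc : ∀ x, c (c x) = c x) {x y : α}
    (hx : c x ≠ x) (h : x ∈ ({c y, y} : Finset α)) : x = y := by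
  rw [mem_insert, mem_singleton] at h
  exact h.resolve_left fun h => hx (by rw [h, hc])

def HasTwoLeaves (c : α → α) : Prop :=
  ∀ z, c z = z → ∃ y₁ y₂, y₁ ≠ y₂ ∧ y₁ ≠ z ∧ y₂ ≠ z ∧ c y₁ = z ∧ c y₂ = z

section StarForest

variable [Fintype α] (c : α → α)

def starEdges : Finset (Pair α) := {v | ∃ x, c x ≠ x ∧ v.1 = {c x, x}}

variable {c}

lemma mem_starEdges {v : Pair α} : v ∈ starEdges c ↔ ∃ x, c x ≠ x ∧ v.1 = {c x, x} := by
  simp [starEdges]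

lemma pair_mem_starEdges {x : α} (hx : c x ≠ x) : pair (c x) x hx ∈ starEdges c :=
  mem_starEdges.2 ⟨x, hx, rfl⟩

lemma apply_eq_of_mem_starEdges (hc : ∀ x, c (c x) = c x) {v : Pair α} (hv : v ∈ starEdges c)
    {y z : α} (hy : y ∈ v.1) (hz : z ∈ v.1) : c y = c z := by
  obtain ⟨x, -, hvx⟩ := mem_starEdges.1 hv
  have key : ∀ y ∈ v.1, c y = c x := fun y hy => by
    rw [hvx, mem_insert, mem_singleton] at hy
    rcases hy with rfl | rfl
    exacts [hc x, rfl]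
  rw [key y hy, key z hz]

lemma apply_mem_of_mem_starEdges (hc : ∀ x, c (c x) = c x) {v : Pair α}
    (hv : v ∈ starEdges c) {y : α} (hy : y ∈ v.1) : c y ∈ v.1 := by
  obtain ⟨x, -, hvx⟩ := mem_starEdges.1 hv
  rw [apply_eq_of_mem_starEdges hc hv hy (by simp [hvx] : x ∈ v.1), hvx]
  exact mem_insert_self _ _

lemma edgesAt_starEdges_of_apply_ne (hc : ∀ x, c (c x) = c x) {x : α} (hx : c x ≠ x) :
    edgesAt (starEdges c) x = {pair (c x) x hx} := by
  ext v
  simp only [mem_edgesAt, mem_singleton]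
  refine ⟨fun ⟨hv, hxv⟩ => ?_, by rintro rfl; exact ⟨pair_mem_starEdges hx, by simp⟩⟩
  obtain ⟨y, hy, hvy⟩ := mem_starEdges.1 hv
  obtain rfl := eq_of_mem_insert_apply hc hx (hvy ▸ hxv)
  exact Subtype.ext hvy

lemma two_le_deg_starEdges (hleaves : HasTwoLeaves c) {z : α} (hz : c z = z) :
    2 ≤ deg (starEdges c) z := by
  obtain ⟨y₁, y₂, hy, hy₁, hy₂, hc₁, hc₂⟩ := hleaves z hz
  have hmem : ∀ y (hyz : y ≠ z), c y = z → pair z y hyz.symm ∈ edgesAt (starEdges c) z :=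
    fun y hyz hcy => mem_edgesAt.2
      ⟨mem_starEdges.2 ⟨y, by rw [hcy]; exact hyz.symm, by simp [hcy]⟩, by simp⟩
  refine one_lt_card.2 ⟨_, hmem y₁ hy₁ hc₁, _, hmem y₂ hy₂ hc₂, fun h => ?_⟩
  have : y₁ ∈ (pair z y₂ hy₂.symm).1 := h ▸ by simp
  simp [hy, hy₁] at this

lemma edgesAt_starEdges_nonempty (hc : ∀ x, c (c x) = c x) (hleaves : HasTwoLeaves c)
    (x : α) : (edgesAt (starEdges c) x).Nonempty := by
  by_cases hx : c x = x
  · exact card_pos.1 ((two_le_deg_starEdges hleaves hx).trans_lt' two_pos)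
  · simp [edgesAt_starEdges_of_apply_ne hc hx]

lemma edgesAt_starEdges_injective (hc : ∀ x, c (c x) = c x) (hleaves : HasTwoLeaves c) :
    Function.Injective (edgesAt (starEdges c)) := by
  intro x y h
  obtain ⟨v, hvx⟩ := edgesAt_starEdges_nonempty hc hleaves x
  have hvy := h ▸ hvx
  have hcxy := apply_eq_of_mem_starEdges hc (mem_edgesAt.1 hvx).1 (mem_edgesAt.1 hvx).2
    (mem_edgesAt.1 hvy).2
  have hdeg : deg (starEdges c) x = deg (starEdges c) y := congrArg card h
  by_cases hx : c x = x <;> by_cases hy : c y = y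
  · rw [← hx, ← hy, hcxy]
  · have := two_le_deg_starEdges hleaves hx
    have : deg (starEdges c) y = 1 := by simp [deg, edgesAt_starEdges_of_apply_ne hc hy]
    omega
  · have := two_le_deg_starEdges hleaves hy
    have : deg (starEdges c) x = 1 := by simp [deg, edgesAt_starEdges_of_apply_ne hc hx]
    omega
  · rw [edgesAt_starEdges_of_apply_ne hc hx, mem_singleton] at hvx
    rw [edgesAt_starEdges_of_apply_ne hc hy, mem_singleton, hvx] at hvy
    have : x ∈ (pair (c y) y hy).1 := hvy ▸ by simp
    exact eq_of_mem_insert_apply hc hx this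

lemma edgesAt_subset_edgesAt_apply (hc : ∀ x, c (c x) = c x) (x : α) :
    edgesAt (starEdges c) x ⊆ edgesAt (starEdges c) (c x) := fun _ hv =>
  mem_edgesAt.2 ⟨(mem_edgesAt.1 hv).1,
    apply_mem_of_mem_starEdges hc (mem_edgesAt.1 hv).1 (mem_edgesAt.1 hv).2⟩

lemma disjoint_edgesAt_apply (hc : ∀ x, c (c x) = c x) {x y : α} (h : c x ≠ c y) :
    Disjoint (edgesAt (starEdges c) x) (edgesAt (starEdges c) (c y)) :=
  disjoint_left.2 fun v hx hy => h <| by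
    rw [apply_eq_of_mem_starEdges hc (mem_edgesAt.1 hx).1 (mem_edgesAt.1 hx).2
      (mem_edgesAt.1 hy).2, hc]

lemma apply_eq_or_of_subset_union (hc : ∀ x, c (c x) = c x) (hleaves : HasTwoLeaves c)
    {x p q : α}
    (h : edgesAt (starEdges c) x ⊆ edgesAt (starEdges c) p ∪ edgesAt (starEdges c) q) :
    c x = c p ∨ c x = c q := by
  obtain ⟨v, hv⟩ := edgesAt_starEdges_nonempty hc hleaves x
  have hvS := (mem_edgesAt.1 hv).1
  rcases mem_union.1 (h hv) with hp | hq
  · exact Or.inl (apply_eq_of_mem_starEdges hc hvS (mem_edgesAt.1 hv).2 (mem_edgesAt.1 hp).2)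
  · exact Or.inr (apply_eq_of_mem_starEdges hc hvS (mem_edgesAt.1 hv).2 (mem_edgesAt.1 hq).2)

lemma edgesAt_eq_of_union_eq (hc : ∀ x, c (c x) = c x) {a b p q : α} (hab : c a ≠ c b)
    (hpq : c p ≠ c q) (hap : c a = c p)
    (h : edgesAt (starEdges c) a ∪ edgesAt (starEdges c) b =
      edgesAt (starEdges c) p ∪ edgesAt (starEdges c) q) :
    edgesAt (starEdges c) a = edgesAt (starEdges c) p := by
  have key : ∀ {x y : α}, c x ≠ c y → edgesAt (starEdges c) x =
      (edgesAt (starEdges c) x ∪ edgesAt (starEdges c) y) ∩ edgesAt (starEdges c) (c x) :=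
    fun hxy => by
      rw [union_inter_distrib_right, inter_eq_left.2 (edgesAt_subset_edgesAt_apply hc _),
        disjoint_iff_inter_eq_empty.1 (disjoint_edgesAt_apply hc (Ne.symm hxy)), union_empty]
  rw [key hab, key hpq, h, hap]

lemma eq_or_eq_of_union_eq_starEdges (hc : ∀ x, c (c x) = c x) (hleaves : HasTwoLeaves c)
    {a b p q : α} {hab : a ≠ b} {hpq : p ≠ q}
    (hu : pair a b hab ∉ starEdges c) (hw : pair p q hpq ∉ starEdges c)
    (h : edgesAt (starEdges c) a ∪ edgesAt (starEdges c) b =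
      edgesAt (starEdges c) p ∪ edgesAt (starEdges c) q) : a = p ∨ a = q := by
  have hpair : ∀ {x y : α} (hxy : x ≠ y), c y = x → pair x y hxy ∈ starEdges c :=
    fun hxy hcy => mem_starEdges.2 ⟨_, by rw [hcy]; exact hxy, by simp [hcy]⟩
  by_cases hcab : c a = c b
  -- `a` and `b` are leaves of one star, and `{p, q}` meets only edges of that star.
  · have ha : c a ≠ a := fun ha => hu (hpair hab (hcab.symm.trans ha))
    have hgroup : ∀ {y}, edgesAt (starEdges c) y ⊆ edgesAt (starEdges c) a ∪
        edgesAt (starEdges c) b → c y = c a := fun hy =>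
      (apply_eq_or_of_subset_union hc hleaves hy).elim id (·.trans hcab.symm)
    have hp := hgroup (h.symm ▸ subset_union_left)
    have hq := hgroup (h.symm ▸ subset_union_right)
    have hea : pair (c a) a ha ∈ edgesAt (starEdges c) p ∪ edgesAt (starEdges c) q :=
      h ▸ mem_union_left _ (by simp [edgesAt_starEdges_of_apply_ne hc ha])
    simp only [mem_union, mem_edgesAt, coe_pair, mem_insert, mem_singleton] at hea
    rcases hea with ⟨-, hpa | rfl⟩ | ⟨-, hqa | rfl⟩
    · exact absurd (hpair hpq (hq.trans hpa.symm)) hw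
    · exact Or.inl rfl
    · exact absurd (by rw [pair_comm]; exact hpair hpq.symm (hp.trans hqa.symm)) hw
    · exact Or.inr rfl
  · rcases apply_eq_or_of_subset_union hc hleaves (h ▸ subset_union_left) with hap | haq
    · have hbq := (apply_eq_or_of_subset_union hc hleaves (h ▸ subset_union_right)).resolve_left
        fun hbp => hcab (hap.trans hbp.symm)
      exact Or.inl <| edgesAt_starEdges_injective hc hleaves <| edgesAt_eq_of_union_eq hc hcab
        (fun hpq => hcab (hap.trans (hpq.trans hbq.symm))) hap h
    · have hbp := (apply_eq_or_of_subset_union hc hleaves (h ▸ subset_union_right)).resolve_right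
        fun hbq => hcab (haq.trans hbq.symm)
      exact Or.inr <| edgesAt_starEdges_injective hc hleaves <| edgesAt_eq_of_union_eq hc hcab
        (fun hqp => hcab (haq.trans (hqp.trans hbp.symm))) haq (h.trans (union_comm _ _))

theorem resolves_starEdges (hc : ∀ x, c (c x) = c x) (hleaves : HasTwoLeaves c) :
    Resolves (starEdges c) := by
  intro u hu w hw h
  obtain ⟨a, b, hab, rfl⟩ := u.exists_eq_pair
  obtain ⟨p, q, hpq, rfl⟩ := w.exists_eq_pair
  simp only [coe_pair, edgesMeeting_pair] at h
  have ha := eq_or_eq_of_union_eq_starEdges hc hleaves hu hw h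
  have hb := eq_or_eq_of_union_eq_starEdges hc hleaves (hab := hab.symm)
    (by rwa [pair_comm] at hu) hw ((union_comm _ _).trans h)
  refine Subtype.ext (eq_of_subset_of_card_le ?_ (by simp [card_pair hab, card_pair hpq]))
  simp only [coe_pair, insert_subset_iff, singleton_subset_iff, mem_insert, mem_singleton]
  exact ⟨ha, hb⟩

lemma card_starEdges (hc : ∀ x, c (c x) = c x) : #(starEdges c) = #{x | c x ≠ x} := by
  refine (card_bij (fun x hx => pair (c x) x (mem_filter.1 hx).2)
    (fun x hx => pair_mem_starEdges _) (fun x hx y hy h => ?_) (fun v hv => ?_)).symm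
  · have : x ∈ (pair (c y) y (mem_filter.1 hy).2).1 := h ▸ by simp
    exact eq_of_mem_insert_apply hc (mem_filter.1 hx).2 this
  · obtain ⟨x, hx, hvx⟩ := mem_starEdges.1 hv
    exact ⟨x, by simpa using hx, Subtype.ext hvx.symm⟩

end StarForest

-- The stars are the residue classes modulo `n / 3`, centred at their least element.
def modCenter (n : ℕ) (x : Fin n) : Fin n := ⟨x % (n / 3), (Nat.mod_le _ _).trans_lt x.2⟩

lemma modCenter_eq_self_iff {n : ℕ} (hn : 3 ≤ n) {x : Fin n} :
    modCenter n x = x ↔ x.1 < n / 3 := by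
  rw [modCenter, Fin.ext_iff]
  exact ⟨fun h => h ▸ Nat.mod_lt _ (by omega), Nat.mod_eq_of_lt⟩

theorem exists_resolves_card_eq {n : ℕ} (hn : 3 ≤ n) :
    ∃ S : Finset (Pair (Fin n)), Resolves S ∧ #S = n - n / 3 := by
  have hc : ∀ x, modCenter n (modCenter n x) = modCenter n x :=
    fun x => Fin.ext (Nat.mod_mod _ _)
  refine ⟨starEdges (modCenter n), resolves_starEdges hc fun z hz => ?_, ?_⟩
  · rw [modCenter_eq_self_iff hn] at hz
    refine ⟨⟨z + n / 3, by omega⟩, ⟨z + 2 * (n / 3), by omega⟩, ?_, ?_, ?_, ?_, ?_⟩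
    all_goals simp [Fin.ext_iff, modCenter, Nat.add_mul_mod_self_right, Nat.mod_eq_of_lt hz]
    all_goals omega
  · have hfix : #{x : Fin n | modCenter n x = x} = n / 3 := by
      simp only [modCenter_eq_self_iff hn, Fin.card_filter_val_lt]
      omega
    have h := card_filter_add_card_filter_not (s := (univ : Finset (Fin n)))
      fun x => modCenter n x = x
    rw [hfix, card_univ, Fintype.card_fin] at h
    rw [card_starEdges hc]
    simp only [ne_eq]
    omega

end Johnson

open Finset Johnson in
theorem metricDim_johnsonGraph2 (n : ℕ) (hn : 6 ≤ n) :
    metricDim (johnsonGraph2 n) = 2 * (n - n % 3) / 3 + n % 3 := by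
  obtain ⟨S₀, hS₀, hcard⟩ := exists_resolves_card_eq (n := n) (by omega)
  have hmem : 2 * (n - n % 3) / 3 + n % 3 ∈
      {k | ∃ S : Finset (Pair (Fin n)), IsResolvingSet (johnsonGraph2 n) ↑S ∧ #S = k} :=
    ⟨S₀, isResolvingSet_johnsonGraph2_iff.2 hS₀, by omega⟩
  refine le_antisymm (Nat.sInf_le hmem) (le_csInf ⟨_, hmem⟩ ?_)
  rintro k ⟨S, hS, rfl⟩
  have := (isResolvingSet_johnsonGraph2_iff.1 hS).two_mul_card_le (by simpa using hn)
  rw [Fintype.card_fin] at this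
  omega
end

section
/- For every integer n ≥ 6, the metric dimension of the Kneser graph K(n,2) equals (2/3)(n − i) + i, where i ∈ {0,1,2} is the residue of n modulo 3 (i.e. it equals 2(n − (n mod 3))/3 + (n mod 3)). -/
/-- The Kneser graph `K(n,k)`: vertices are the k-element subsets of an
`n`-element set, adjacent when they are disjoint. -/
def kneserGraph (n k : ℕ) (hk : k ≠ 0) : SimpleGraph {s : Finset (Fin n) // s.card = k} where
  Adj a b := Disjoint (a : Finset (Fin n)) (b : Finset (Fin n))
  symm := ⟨fun a b h => h.symm⟩
  loopless := ⟨fun a h => by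
    have h0 : (a : Finset (Fin n)) = ∅ := by simpa using disjoint_self.mp h
    exact hk (by simpa [h0] using a.2.symm)⟩


/-!
Since `K(n,2)` has diameter two for `n ≥ 5`, a set `S` of 2-sets is resolving iff any two
distinct 2-sets outside `S` are told apart by a member of `S` meeting exactly one of them.
We read `S` as a graph on the ground set.

Upper bound: cut the ground set into `⌊n/3⌋` blocks of size at least three and take a spanning
star in each block, `n - ⌊n/3⌋` edges in all. A 2-set that is not a star edge is determined by
the star edges it meets.

Lower bound: separation forbids a component `K₂`, two isolated vertices, and, next to an isolated
vertex, a cherry (a component that is a path on three vertices). A count of the degrees,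
with each leaf charged to its neighbour, then gives `3 |E| ≥ 2 n` for `n ≥ 6`.
-/

open Finset

namespace SimpleGraph

variable {V : Type*} [Fintype V] (G : SimpleGraph V) [DecidableRel G.Adj]

def leafDegree (x : V) : ℕ := #{y ∈ G.neighborFinset x | G.degree y = 1}

lemma sum_leafDegree : ∑ x, G.leafDegree x = #{x | G.degree x = 1} := by
  have := sum_card_bipartiteAbove_eq_sum_card_bipartiteBelow (s := univ)
    (t := ({y | G.degree y = 1} : Finset V)) (r := G.Adj)
  convert this using 1
  · refine sum_congr rfl fun x _ => congrArg card ?_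
    ext y; simp [bipartiteAbove, and_comm]
  · rw [card_eq_sum_ones]
    refine sum_congr rfl fun y hy => ?_
    rw [← (mem_filter.1 hy).2, ← card_neighborFinset_eq_degree]
    congr 1; ext x; simp [bipartiteBelow, adj_comm]

variable {G}

lemma leafDegree_lt_degree {x y : V} (hxy : G.Adj x y) (hy : G.degree y ≠ 1) :
    G.leafDegree x < G.degree x := by
  rw [← card_neighborFinset_eq_degree]
  exact card_lt_card (filter_ssubset.2 ⟨y, (mem_neighborFinset ..).2 hxy, hy⟩)

/-- With `L` leaves and degree sum `D` over the vertices of degree at least two, `2 |E| = L + D`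
and `L ≤ D`; an isolated vertex rules out cherries, giving `2 D ≥ L + 3 |P|`, and the parity
of `L + D` settles the few small cases. -/
theorem two_mul_card_le_three_mul_card_edgeFinset (hV : 6 ≤ Fintype.card V)
    (hleaf : ∀ x y, G.Adj x y → G.degree x = 1 → G.degree y ≠ 1)
    (hiso : ∀ z z', G.degree z = 0 → G.degree z' = 0 → z = z')
    (hcherry : ∀ z y, G.degree z = 0 → G.degree y = 2 → ∃ x, G.Adj y x ∧ G.degree x ≠ 1) :
    2 * Fintype.card V ≤ 3 * #G.edgeFinset := by
  set P : Finset V := {x | 2 ≤ G.degree x}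
  have hcard : Fintype.card V = #{x | G.degree x = 0} + #{x | G.degree x = 1} + #P := by
    rw [← card_univ, card_eq_sum_ones, card_filter, card_filter, card_filter,
      ← sum_add_distrib, ← sum_add_distrib]
    exact sum_congr rfl fun x _ => by split_ifs <;> omega
  have hdeg : 2 * #G.edgeFinset = #{x | G.degree x = 1} + ∑ x ∈ P, G.degree x := by
    rw [← sum_degrees_eq_twice_card_edges, sum_filter, card_filter, ← sum_add_distrib]
    exact sum_congr rfl fun x _ => by split_ifs <;> omega
  have hL : #{x | G.degree x = 1} = ∑ x ∈ P, G.leafDegree x := by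
    rw [← sum_leafDegree, sum_filter]
    refine sum_congr rfl fun x _ => ?_
    split_ifs with hx
    · rfl
    refine card_eq_zero.2 (filter_eq_empty_iff.2 fun y hy hy1 => ?_)
    have hxy := (mem_neighborFinset ..).1 hy
    have : G.degree x ≠ 0 := (G.degree_pos_iff_exists_adj x).2 ⟨y, hxy⟩ |>.ne'
    exact hleaf x y hxy (by omega) hy1
  have hLD : ∑ x ∈ P, G.leafDegree x ≤ ∑ x ∈ P, G.degree x :=
    sum_le_sum fun x _ => (card_filter_le _ _).trans (card_neighborFinset_eq_degree G x).le
  have hPD : 2 * #P ≤ ∑ x ∈ P, G.degree x := by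
    rw [mul_comm, ← smul_eq_mul, ← sum_const]
    exact sum_le_sum fun x hx => (mem_filter.1 hx).2
  have hZ : #{x | G.degree x = 0} ≤ 1 :=
    card_le_one.2 fun z hz z' hz' => hiso z z' (mem_filter.1 hz).2 (mem_filter.1 hz').2
  have hZ1 : 0 < #{x | G.degree x = 0} →
      3 * #P + ∑ x ∈ P, G.leafDegree x ≤ 2 * ∑ x ∈ P, G.degree x := by
    intro h
    obtain ⟨z, hz⟩ := card_pos.1 h
    have hz0 : G.degree z = 0 := (mem_filter.1 hz).2
    rw [mul_comm, ← smul_eq_mul, ← sum_const, ← sum_add_distrib, mul_sum]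
    refine sum_le_sum fun x hx => ?_
    have hx2 := (mem_filter.1 hx).2
    have hℓ : G.leafDegree x ≤ G.degree x :=
      (card_filter_le _ _).trans (card_neighborFinset_eq_degree G x).le
    rcases hx2.eq_or_lt with h2 | h3
    · obtain ⟨y, hxy, hy⟩ := hcherry z x hz0 h2.symm
      have := leafDegree_lt_degree hxy hy
      omega
    · omega
  omega

end SimpleGraph

section DiameterTwo

variable {V : Type*} {G : SimpleGraph V}

theorem isResolvingSet_iff_of_diam_two (hG : ∀ u v, u ≠ v → ¬G.Adj u v → G.dist u v = 2)
    {S : Set V} :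
    IsResolvingSet G S ↔ ∀ u w, u ≠ w → u ∉ S → w ∉ S → ∃ v ∈ S, ¬(G.Adj u v ↔ G.Adj w v) := by
  classical
  have hdist {u v : V} (huv : u ≠ v) : G.dist u v = if G.Adj u v then 1 else 2 := by
    split_ifs with h
    · exact SimpleGraph.dist_eq_one_iff_adj.2 h
    · exact hG u v huv h
  constructor
  · intro hS u w huw hu hw
    obtain ⟨v, hv, hd⟩ := hS u w huw
    refine ⟨v, hv, fun h => hd ?_⟩
    rw [hdist (ne_of_mem_of_not_mem hv hu).symm, hdist (ne_of_mem_of_not_mem hv hw).symm]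
    simp only [h]
  · intro h u w huw
    by_cases hu : u ∈ S
    · refine ⟨u, hu, ?_⟩
      rw [SimpleGraph.dist_self, hdist huw.symm]
      split_ifs <;> simp
    by_cases hw : w ∈ S
    · refine ⟨w, hw, ?_⟩
      rw [SimpleGraph.dist_self, hdist huw]
      split_ifs <;> simp
    obtain ⟨v, hv, hadj⟩ := h u w huw hu hw
    refine ⟨v, hv, ?_⟩
    rw [hdist (ne_of_mem_of_not_mem hv hu).symm, hdist (ne_of_mem_of_not_mem hv hw).symm]
    split_ifs <;> simp_all

theorem metricDim_eq_of_forall_le {G : SimpleGraph V} {m : ℕ}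
    (hex : ∃ S : Finset V, IsResolvingSet G ↑S ∧ S.card = m)
    (hle : ∀ S : Finset V, IsResolvingSet G ↑S → m ≤ S.card) : metricDim G = m :=
  le_antisymm (Nat.sInf_le hex) (le_csInf ⟨m, hex⟩ fun _ ⟨S, hS, hcard⟩ => hcard ▸ hle S hS)

end DiameterTwo

abbrev TwoSet (α : Type*) := {s : Finset α // s.card = 2}

section Kneser

variable {n k : ℕ} {hk : k ≠ 0}

lemma kneserGraph_exists_disjoint (h : 3 * k ≤ n + 1) {a b : {s : Finset (Fin n) // s.card = k}}
    (hab : ¬Disjoint a.1 b.1) :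
    ∃ c : {s : Finset (Fin n) // s.card = k}, Disjoint c.1 a.1 ∧ Disjoint c.1 b.1 := by
  have hcompl : k ≤ #(a.1 ∪ b.1)ᶜ := by
    have hunion := card_union_add_card_inter a.1 b.1
    have hinter := card_pos.2 (not_disjoint_iff_nonempty_inter.1 hab)
    rw [a.2, b.2] at hunion
    rw [card_compl, Fintype.card_fin]
    omega
  obtain ⟨c, hc, hck⟩ := exists_subset_card_eq hcompl
  exact ⟨⟨c, hck⟩, disjoint_compl_left.mono hc subset_union_left,
    disjoint_compl_left.mono hc subset_union_right⟩

lemma kneserGraph_dist_eq_two (h : 3 * k ≤ n + 1) {a b : {s : Finset (Fin n) // s.card = k}}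
    (hab : a ≠ b) (hadj : ¬(kneserGraph n k hk).Adj a b) : (kneserGraph n k hk).dist a b = 2 := by
  obtain ⟨c, hca, hcb⟩ := kneserGraph_exists_disjoint h hadj
  let p : (kneserGraph n k hk).Walk a b := .cons (G := kneserGraph n k hk) hca.symm (.cons hcb .nil)
  have h2 : (kneserGraph n k hk).dist a b ≤ 2 := SimpleGraph.dist_le p
  have h0 := p.reachable.pos_dist_of_ne hab
  have h1 : (kneserGraph n k hk).dist a b ≠ 1 := fun h => hadj (SimpleGraph.dist_eq_one_iff_adj.1 h)
  omega

end Kneser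

section Separating

variable {α : Type*} [DecidableEq α]

def SeparatesPairs (S : Finset (TwoSet α)) : Prop :=
  ∀ u w : TwoSet α, u ≠ w → u ∉ S → w ∉ S → ∃ v ∈ S, ¬(Disjoint u.1 v.1 ↔ Disjoint w.1 v.1)

theorem isResolvingSet_kneserGraph_iff {n : ℕ} (hn : 5 ≤ n) {S : Finset (TwoSet (Fin n))} :
    IsResolvingSet (kneserGraph n 2 two_ne_zero) ↑S ↔ SeparatesPairs S := by
  rw [isResolvingSet_iff_of_diam_two fun u v => kneserGraph_dist_eq_two (by omega)]
  simp only [mem_coe]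
  rfl

end Separating

section Stars

variable {α : Type*} {f : α → α}

/-- `f` sends each point to the centre of its star; every centre has at least two leaves. -/
structure IsStarCenterMap (f : α → α) : Prop where
  idem : ∀ x, f (f x) = f x
  two_leaves : ∀ c, f c = c → ∃ p q, p ≠ q ∧ p ≠ c ∧ q ≠ c ∧ f p = c ∧ f q = c

variable [DecidableEq α]

/-- The centre `c = f x` lies in `w`, so every leaf of `c` lies in `u`; hence `u` consists of two
leaves of `c`, and the star edge through the other point of `w` cannot meet `u`. -/
lemma IsStarCenterMap.false_of_leaf_mem (hf : IsStarCenterMap f) {u w : Finset α}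
    (hu : #u ≤ 2) (hw : 2 ≤ #w) (hu' : ∀ x ∈ u, f x ∈ u → f x = x)
    (hw' : ∀ x ∈ w, f x ∈ w → f x = x)
    (H : ∀ x, f x ≠ x → (x ∈ u ∨ f x ∈ u ↔ x ∈ w ∨ f x ∈ w))
    {x : α} (hxu : x ∈ u) (hxw : x ∉ w) (hx : f x ≠ x) : False := by
  set c := f x
  have hcw : c ∈ w := ((H x hx).1 (Or.inl hxu)).resolve_left hxw
  have hcu : c ∉ u := fun h => hx (hu' x hxu h)
  obtain ⟨p, q, hpq, hpc, hqc, hfp, hfq⟩ := hf.two_leaves c (hf.idem x)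
  have leaf_mem {y : α} (hy : f y = c) (hyc : y ≠ c) : y ∈ u :=
    ((H y fun h => hyc (h.symm.trans hy)).2 (Or.inr (hy ▸ hcw))).resolve_right (hy ▸ hcu)
  have hu_eq : u = {p, q} := (eq_of_subset_of_card_le
    (insert_subset (leaf_mem hfp hpc) (singleton_subset_iff.2 (leaf_mem hfq hqc)))
    (hu.trans_eq (card_pair hpq).symm)).symm
  have hfu : ∀ y ∈ u, f y = c := by
    intro y hy
    rw [hu_eq, mem_insert, mem_singleton] at hy
    rcases hy with rfl | rfl <;> assumption
  obtain ⟨z, hzw, hzc⟩ := exists_mem_ne hw c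
  obtain ⟨y, hy, hzy⟩ : ∃ y, f y ≠ y ∧ (z = y ∨ z = f y) := by
    by_cases hz : f z = z
    · obtain ⟨p', _, _, hp'z, _, hfp', _⟩ := hf.two_leaves z hz
      exact ⟨p', fun h => hp'z (h.symm.trans hfp'), Or.inr hfp'.symm⟩
    · exact ⟨z, hz, Or.inl rfl⟩
  rcases (H y hy).2 (hzy.elim (fun h => Or.inl (h ▸ hzw)) fun h => Or.inr (h ▸ hzw)) with
    hyu | hfyu
  · have hfy := hfu y hyu
    rcases hzy with rfl | h
    · exact hzc ((hw' z hzw (hfy ▸ hcw)).symm.trans hfy)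
    · exact hzc (h.trans hfy)
  · exact hcu ((hf.idem y ▸ hfu _ hfyu) ▸ hfyu)

theorem IsStarCenterMap.exists_separating (hf : IsStarCenterMap f) {u w : Finset α}
    (hu : #u = 2) (hw : #w = 2) (huw : u ≠ w)
    (hu' : ∀ x ∈ u, f x ∈ u → f x = x) (hw' : ∀ x ∈ w, f x ∈ w → f x = x) :
    ∃ x, f x ≠ x ∧ ¬(x ∈ u ∨ f x ∈ u ↔ x ∈ w ∨ f x ∈ w) := by
  by_contra! H
  obtain ⟨x, hxu, hxw⟩ :=
    not_subset.1 fun h => huw (eq_of_subset_of_card_le h (hw.trans hu.symm).le)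
  by_cases hx : f x = x
  · obtain ⟨p, _, _, hpx, _, hfp, _⟩ := hf.two_leaves x hx
    have hp : f p ≠ p := fun h => hpx (h.symm.trans hfp)
    have hpw : p ∈ w := ((H p hp).1 (Or.inr (hfp ▸ hxu))).resolve_right (hfp ▸ hxw)
    have hpu : p ∉ u := fun h => hp (hu' p h (hfp ▸ hxu))
    exact hf.false_of_leaf_mem hw.le hu.ge hw' hu' (fun y hy => (H y hy).symm) hpw hpu hp
  · exact hf.false_of_leaf_mem hu.le hw.ge hu' hw' H hxu hxw hx

variable [Fintype α]

def starEdges (f : α → α) : Finset (TwoSet α) := {e | ∃ x, f x ≠ x ∧ e.1 = {x, f x}}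

lemma card_starEdges (hf : ∀ x, f (f x) = f x) : #(starEdges f) = #{x | f x ≠ x} := by
  symm
  refine card_bij (fun x hx => ⟨{x, f x}, card_pair (mem_filter.1 hx).2.symm⟩) ?_ ?_ ?_
  · intro x hx
    exact mem_filter.2 ⟨mem_univ _, x, (mem_filter.1 hx).2, rfl⟩
  · intro x hx y _ hxy
    have hx' : x ∈ ({y, f y} : Finset α) := by
      have h : ({x, f x} : Finset α) = {y, f y} := congrArg Subtype.val hxy
      rw [← h]
      exact mem_insert_self _ _
    rcases mem_insert.1 hx' with h | h
    · exact h
    · rw [mem_singleton] at h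
      exact absurd (by rw [h, hf]) (mem_filter.1 hx).2
  · intro e he
    obtain ⟨x, hx, hex⟩ := (mem_filter.1 he).2
    exact ⟨x, mem_filter.2 ⟨mem_univ _, hx⟩, Subtype.ext hex.symm⟩

theorem IsStarCenterMap.separatesPairs (hf : IsStarCenterMap f) : SeparatesPairs (starEdges f) := by
  have no_edge {e : TwoSet α} (he : e ∉ starEdges f) (x : α) (hx : x ∈ e.1) (hfx : f x ∈ e.1) :
      f x = x := by
    by_contra h
    refine he (mem_filter.2 ⟨mem_univ _, x, h, (eq_of_subset_of_card_le
      (insert_subset hx (singleton_subset_iff.2 hfx)) ?_).symm⟩)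
    rw [e.2, card_pair (Ne.symm h)]
  intro u w huw hu hw
  obtain ⟨x, hx, hsep⟩ := hf.exists_separating u.2 w.2 (Subtype.coe_injective.ne huw)
    (no_edge hu) (no_edge hw)
  refine ⟨⟨{x, f x}, card_pair (Ne.symm hx)⟩, mem_filter.2 ⟨mem_univ _, x, hx, rfl⟩, ?_⟩
  simp only [disjoint_insert_right, disjoint_singleton_right]
  tauto

end Stars

section Blocks

variable {n : ℕ}

/-- Cut `0, …, n - 1` into blocks `{3j, 3j+1, 3j+2}`, the last block also taking the remainder,
and send each point to the first point of its block. -/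
def blockStart (n : ℕ) (x : Fin n) : Fin n := ⟨3 * min (x.1 / 3) (n / 3 - 1), by omega⟩

lemma isStarCenterMap_blockStart (hn : 3 ≤ n) : IsStarCenterMap (blockStart n) where
  idem x := Fin.ext (by simp only [blockStart]; omega)
  two_leaves c hc := by
    have hc' : 3 * min (c.1 / 3) (n / 3 - 1) = c := congrArg Fin.val hc
    refine ⟨⟨c + 1, by omega⟩, ⟨c + 2, by omega⟩, ?_, ?_, ?_, ?_, ?_⟩ <;>
      simp only [ne_eq, Fin.ext_iff, blockStart] <;> omega

lemma card_fixed_blockStart (hn : 3 ≤ n) : #{x | blockStart n x = x} = n / 3 := by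
  rw [← card_range (n / 3)]
  symm
  refine card_bij (fun j hj => ⟨3 * j, by rw [mem_range] at hj; omega⟩) ?_ ?_ ?_
  · intro j hj
    rw [mem_range] at hj
    simp only [mem_filter, mem_univ, true_and, Fin.ext_iff, blockStart]
    omega
  · intro a _ b _ h
    simp only [Fin.mk.injEq] at h
    omega
  · intro x hx
    simp only [mem_filter, mem_univ, true_and, Fin.ext_iff, blockStart] at hx
    exact ⟨x / 3, mem_range.2 (by omega), Fin.ext (by simp only; omega)⟩

lemma card_starEdges_blockStart (hn : 3 ≤ n) : #(starEdges (blockStart n)) = n - n / 3 := by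
  rw [card_starEdges (isStarCenterMap_blockStart hn).idem, ← card_fixed_blockStart hn,
    filter_not, card_sdiff_of_subset (subset_univ _), card_univ, Fintype.card_fin]

end Blocks

section EdgeGraph

variable {α : Type*} {S : Finset (TwoSet α)}

def edgeGraph (S : Finset (TwoSet α)) : SimpleGraph α where
  Adj x y := x ≠ y ∧ ∃ e ∈ S, x ∈ e.1 ∧ y ∈ e.1
  symm := ⟨fun _ _ ⟨h, e, he, hx, hy⟩ => ⟨h.symm, e, he, hy, hx⟩⟩
  loopless := ⟨fun _ h => h.1 rfl⟩

lemma edgeGraph_exists_adj {e : TwoSet α} (he : e ∈ S) {x : α} (hx : x ∈ e.1) :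
    ∃ y ∈ e.1, (edgeGraph S).Adj x y := by
  obtain ⟨y, hy, hyx⟩ := exists_mem_ne (by rw [e.2]; norm_num) x
  exact ⟨y, hy, hyx.symm, e, he, hx, hy⟩

variable [DecidableEq α]

instance : DecidableRel (edgeGraph S).Adj := fun x y =>
  inferInstanceAs (Decidable (x ≠ y ∧ ∃ e ∈ S, x ∈ e.1 ∧ y ∈ e.1))

lemma SeparatesPairs.pair_eq (hS : SeparatesPairs S) {x a y b : α} (hxa : x ≠ a) (hyb : y ≠ b)
    (h₁ : ¬(edgeGraph S).Adj x a) (h₂ : ¬(edgeGraph S).Adj y b)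
    (h : ∀ v ∈ S, (x ∈ v.1 ∨ a ∈ v.1 ↔ y ∈ v.1 ∨ b ∈ v.1)) : ({x, a} : Finset α) = {y, b} := by
  by_contra hne
  have not_mem {p q : α} (hpq : p ≠ q) (hadj : ¬(edgeGraph S).Adj p q) :
      (⟨{p, q}, card_pair hpq⟩ : TwoSet α) ∉ S := fun hmem =>
    hadj ⟨hpq, _, hmem, mem_insert_self _ _, mem_insert_of_mem (mem_singleton_self _)⟩
  obtain ⟨v, hv, hsep⟩ := hS ⟨{x, a}, card_pair hxa⟩ ⟨{y, b}, card_pair hyb⟩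
    (fun h => hne (congrArg Subtype.val h)) (not_mem hxa h₁) (not_mem hyb h₂)
  simp only [disjoint_insert_left, disjoint_singleton_left] at hsep
  have := h v hv
  tauto

variable [Fintype α]

lemma degree_edgeGraph_le (x : α) : (edgeGraph S).degree x ≤ #{e ∈ S | x ∈ e.1} := by
  calc (edgeGraph S).degree x = #((edgeGraph S).neighborFinset x) :=
        (SimpleGraph.card_neighborFinset_eq_degree ..).symm
    _ ≤ #({e ∈ S | x ∈ e.1}.biUnion fun e => e.1.erase x) := card_le_card fun y hy => by
        obtain ⟨hxy, e, he, hx, hy⟩ := (SimpleGraph.mem_neighborFinset ..).1 hy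
        exact mem_biUnion.2 ⟨e, mem_filter.2 ⟨he, hx⟩, mem_erase.2 ⟨Ne.symm hxy, hy⟩⟩
    _ ≤ ∑ e ∈ {e ∈ S | x ∈ e.1}, #(e.1.erase x) := card_biUnion_le
    _ = #{e ∈ S | x ∈ e.1} := by
      rw [card_eq_sum_ones]
      refine sum_congr rfl fun e he => ?_
      rw [card_erase_of_mem (mem_filter.1 he).2, e.2]

lemma card_edgeFinset_edgeGraph_le : #(edgeGraph S).edgeFinset ≤ #S := by
  have hdouble := sum_card_bipartiteAbove_eq_sum_card_bipartiteBelow (s := univ) (t := S)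
    (r := fun x (e : TwoSet α) => x ∈ e.1)
  have : 2 * #(edgeGraph S).edgeFinset ≤ 2 * #S :=
    calc 2 * #(edgeGraph S).edgeFinset = ∑ x, (edgeGraph S).degree x :=
          ((edgeGraph S).sum_degrees_eq_twice_card_edges).symm
      _ ≤ ∑ x, #{e ∈ S | x ∈ e.1} := sum_le_sum fun x _ => degree_edgeGraph_le x
      _ = ∑ e ∈ S, #e.1 := by
          simpa [bipartiteAbove, bipartiteBelow] using hdouble
      _ = 2 * #S := by rw [sum_congr rfl fun e _ => e.2, sum_const, smul_eq_mul, mul_comm]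
  omega

lemma mem_of_degree_edgeGraph_eq_one {x y : α} (hx : (edgeGraph S).degree x = 1)
    (hxy : (edgeGraph S).Adj x y) {e : TwoSet α} (he : e ∈ S) (hxe : x ∈ e.1) : y ∈ e.1 := by
  obtain ⟨y', hy', hxy'⟩ := edgeGraph_exists_adj he hxe
  rwa [(SimpleGraph.degree_eq_one_iff_existsUnique_adj.1 hx).unique hxy hxy']

lemma not_mem_of_degree_edgeGraph_eq_zero {x : α} (hx : (edgeGraph S).degree x = 0)
    {e : TwoSet α} (he : e ∈ S) : x ∉ e.1 := fun hxe =>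
  have ⟨_, _, hxy⟩ := edgeGraph_exists_adj he hxe
  (((edgeGraph S).degree_pos_iff_exists_adj x).2 ⟨_, hxy⟩).ne' hx

lemma exists_ne_ne (hα : 3 ≤ Fintype.card α) (x y : α) : ∃ a, a ≠ x ∧ a ≠ y := by
  have : ({x, y} : Finset α) ≠ univ := (card_lt_iff_ne_univ _).1 (card_le_two.trans_lt (by omega))
  simpa [eq_univ_iff_forall] using this

namespace SeparatesPairs

variable (hS : SeparatesPairs S)
include hS

lemma degree_ne_one_of_adj (hα : 3 ≤ Fintype.card α) {x y : α} (hxy : (edgeGraph S).Adj x y)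
    (hx : (edgeGraph S).degree x = 1) : (edgeGraph S).degree y ≠ 1 := by
  intro hy
  obtain ⟨a, hax, hay⟩ := exists_ne_ne hα x y
  have not_adj {p q : α} (hp : (edgeGraph S).degree p = 1) (hpq : (edgeGraph S).Adj p q)
      (hqa : a ≠ q) : ¬(edgeGraph S).Adj p a := fun hpa =>
    hqa ((SimpleGraph.degree_eq_one_iff_existsUnique_adj.1 hp).unique hpa hpq)
  have h := hS.pair_eq hax.symm hay.symm (not_adj hx hxy hay) (not_adj hy hxy.symm hax)
    fun v hv => ⟨Or.imp_left (mem_of_degree_edgeGraph_eq_one hx hxy hv),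
      Or.imp_left (mem_of_degree_edgeGraph_eq_one hy hxy.symm hv)⟩
  exact hxy.ne ((insert_inj (notMem_singleton.2 hax.symm)).1 h)

lemma eq_of_degree_eq_zero (hα : 3 ≤ Fintype.card α) {z z' : α}
    (hz : (edgeGraph S).degree z = 0) (hz' : (edgeGraph S).degree z' = 0) : z = z' := by
  obtain ⟨a, haz, haz'⟩ := exists_ne_ne hα z z'
  have not_adj {p : α} (hp : (edgeGraph S).degree p = 0) : ¬(edgeGraph S).Adj p a := fun hpa =>
    (((edgeGraph S).degree_pos_iff_exists_adj p).2 ⟨a, hpa⟩).ne' hp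
  have h := hS.pair_eq haz.symm haz'.symm (not_adj hz) (not_adj hz') fun v hv => by
    simp [not_mem_of_degree_edgeGraph_eq_zero hz hv, not_mem_of_degree_edgeGraph_eq_zero hz' hv]
  exact (insert_inj (notMem_singleton.2 haz.symm)).1 h

lemma exists_adj_degree_ne_one {z y : α} (hz : (edgeGraph S).degree z = 0)
    (hy : (edgeGraph S).degree y = 2) :
    ∃ x, (edgeGraph S).Adj y x ∧ (edgeGraph S).degree x ≠ 1 := by
  by_contra! hleaf
  obtain ⟨x, x', hxx', hN⟩ :=
    card_eq_two.1 (((edgeGraph S).card_neighborFinset_eq_degree y).trans hy)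
  have hyx : (edgeGraph S).Adj y x :=
    (SimpleGraph.mem_neighborFinset ..).1 (hN ▸ mem_insert_self _ _)
  have hyx' : (edgeGraph S).Adj y x' :=
    (SimpleGraph.mem_neighborFinset ..).1 (hN ▸ mem_insert_of_mem (mem_singleton_self _))
  have hyz : y ≠ z := by rintro rfl; omega
  have hnadj : ¬(edgeGraph S).Adj x x' := fun h =>
    hyx'.ne ((SimpleGraph.degree_eq_one_iff_existsUnique_adj.1 (hleaf x hyx)).unique hyx.symm h)
  have hnadj' : ¬(edgeGraph S).Adj y z := fun h =>
    (((edgeGraph S).degree_pos_iff_exists_adj z).2 ⟨y, h.symm⟩).ne' hz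
  have h := hS.pair_eq hxx' hyz hnadj hnadj' fun v hv => by
    have hzv := not_mem_of_degree_edgeGraph_eq_zero hz hv
    refine ⟨fun h => Or.inl ?_, fun h => ?_⟩
    · rcases h with h | h
      · exact mem_of_degree_edgeGraph_eq_one (hleaf x hyx) hyx.symm hv h
      · exact mem_of_degree_edgeGraph_eq_one (hleaf x' hyx') hyx'.symm hv h
    · obtain ⟨y', hy'v, hyy'⟩ := edgeGraph_exists_adj hv (h.resolve_right hzv)
      have : y' ∈ ({x, x'} : Finset α) := hN ▸ (SimpleGraph.mem_neighborFinset ..).2 hyy'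
      rcases mem_insert.1 this with rfl | h'
      · exact Or.inl hy'v
      · exact Or.inr (mem_singleton.1 h' ▸ hy'v)
  have : y ∈ ({x, x'} : Finset α) := h ▸ mem_insert_self _ _
  rcases mem_insert.1 this with h | h
  · exact hyx.ne h
  · exact hyx'.ne (mem_singleton.1 h)

theorem two_mul_card_le (hα : 6 ≤ Fintype.card α) : 2 * Fintype.card α ≤ 3 * #S :=
  (SimpleGraph.two_mul_card_le_three_mul_card_edgeFinset hα
    (fun _ _ => hS.degree_ne_one_of_adj (by omega)) (fun _ _ => hS.eq_of_degree_eq_zero (by omega))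
    fun _ _ => hS.exists_adj_degree_ne_one).trans
    (Nat.mul_le_mul_left 3 card_edgeFinset_edgeGraph_le)

end SeparatesPairs

end EdgeGraph

theorem metricDim_kneserGraph2 (n : ℕ) (hn : 6 ≤ n) :
    metricDim (kneserGraph n 2 (by norm_num)) = 2 * (n - n % 3) / 3 + n % 3 := by
  rw [show 2 * (n - n % 3) / 3 + n % 3 = n - n / 3 by omega]
  apply metricDim_eq_of_forall_le
  · exact ⟨starEdges (blockStart n), (isResolvingSet_kneserGraph_iff (by omega)).2
      (isStarCenterMap_blockStart (by omega)).separatesPairs, card_starEdges_blockStart (by omega)⟩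
  · intro S hS
    have := ((isResolvingSet_kneserGraph_iff (by omega)).1 hS).two_mul_card_le
      (by rwa [Fintype.card_fin])
    rw [Fintype.card_fin] at this
    omega
end

section
/- Let Γ be a finite connected distance-regular graph of diameter d whose shortest odd cycle has length 2d+1. Then the bipartite double D(Γ) is connected and has the same metric dimension as Γ. -/
/-- The bipartite double `D(Γ)` of a graph `Γ`: vertex set `V × Bool`, with
`(v,ε)` adjacent to `(w,δ)` iff `ε ≠ δ` and `v` is adjacent to `w` in `Γ`. -/
def bipartiteDouble {V : Type*} (G : SimpleGraph V) : SimpleGraph (V × Bool) where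
  Adj x y := x.2 ≠ y.2 ∧ G.Adj x.1 y.1
  symm := ⟨fun x y h => ⟨h.1.symm, h.2.symm⟩⟩
  loopless := ⟨fun x h => h.1 rfl⟩

/-!
A walk of `D(Γ)` from `(u,ε)` to `(w,δ)` is a walk of `Γ` from `u` to `w` whose length is even
exactly when `ε = δ`. Between `u` and `w` the shortest walk whose parity differs from that of
`k = d(u,w)` has length `2d+1-k`: no less, since with a geodesic it closes up to an odd closed
walk, which contains an odd cycle; and no more, since distance-regularity lets us walk from `w`
away from `u` to distance `d` and then (as `a_d = b_0 - c_d` is positive, which the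
`(2d+1)`-cycle witnesses) take one edge to another vertex at distance `d`. So the distance in
`D(Γ)` is `k` or `2d+1-k` according to the signs; the two cases take values in `[0,d]` and
`[d+1,2d+1]` and have opposite parities. Hence `S ↦ S × {+}` and `S ↦ π₁(S)` turn resolving
sets into resolving sets without enlarging them.
-/

open SimpleGraph

section

variable {V : Type*} {G : SimpleGraph V}

lemma SimpleGraph.Walk.exists_append_append_of_not_isPath [DecidableEq V] {u v : V}
    (p : G.Walk u v) (hp : ¬ p.IsPath) :
    ∃ (x : V) (a : G.Walk u x) (c : G.Walk x x) (b : G.Walk x v),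
      0 < c.length ∧ p.length = a.length + c.length + b.length := by
  induction p with
  | nil => exact absurd Walk.IsPath.nil hp
  | @cons u z v h q ih =>
    by_cases hu : u ∈ q.support
    · refine ⟨u, .nil, .cons h (q.takeUntil u hu), q.dropUntil u hu, by simp, ?_⟩
      have := congrArg Walk.length (q.take_spec hu)
      simp only [Walk.length_append] at this
      simp only [Walk.length_cons, Walk.length_nil]
      omega
    · obtain ⟨x, a, c, b, hc, hlen⟩ := ih fun hq => hp (hq.cons hu)
      exact ⟨x, .cons h a, c, b, hc, by simp only [Walk.length_cons, hlen]; omega⟩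

lemma SimpleGraph.Walk.le_length_of_odd_of_forall_isCycle {g : ℕ}
    (hcyc : ∀ (v : V) (c : G.Walk v v), c.IsCycle → Odd c.length → g ≤ c.length)
    {v : V} (p : G.Walk v v) (hp : Odd p.length) : g ≤ p.length := by
  classical
  induction hn : p.length using Nat.strong_induction_on generalizing v with
  | _ n ih =>
  cases p with
  | nil => rw [Walk.length_nil] at hp; exact absurd hp (by decide)
  | @cons _ x _ h q =>
    by_cases hq : q.IsPath
    · refine hn ▸ hcyc v _ ((Walk.cons_isCycle_iff q h).2 ⟨hq, fun he => ?_⟩) hp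
      rw [Walk.length_cons, hq.length_eq_one_of_mem_edges (Sym2.eq_swap ▸ he)] at hp
      exact absurd hp (by decide)
    · -- `p` splits into the closed walks `c` and `h :: (a ++ b)`, one of which is odd
      obtain ⟨y, a, c, b, hc, hlen⟩ := q.exists_append_append_of_not_isPath hq
      rw [Walk.length_cons] at hn hp
      rcases Nat.even_or_odd c.length with heven | hodd
      · have hodd' : Odd (Walk.cons h (a.append b)).length := by
          rw [Nat.odd_iff] at hp ⊢; rw [Nat.even_iff] at heven
          simp only [Walk.length_cons, Walk.length_append]; omega
        have := ih _ (by simp only [Walk.length_cons, Walk.length_append]; omega) _ hodd' rfl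
        simp only [Walk.length_cons, Walk.length_append] at this
        omega
      · have := ih _ (by omega) c hodd rfl
        omega

lemma SimpleGraph.Walk.le_length_add_dist_of_odd {g : ℕ}
    (hodd : ∀ (v : V) (c : G.Walk v v), Odd c.length → g ≤ c.length)
    {u w : V} (p : G.Walk u w) (hp : Odd (p.length + G.dist u w)) :
    g ≤ p.length + G.dist u w := by
  obtain ⟨r, hr⟩ := p.reachable.symm.exists_walk_length_eq_dist
  rw [SimpleGraph.dist_comm] at hr
  simpa [hr] using hodd u (p.append r) (by simpa [hr] using hp)

lemma SimpleGraph.Walk.exists_adj_dist_eq_dist_of_odd (u : V) {a z : V} (p : G.Walk a z)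
    (hp : Odd (p.length + G.dist u a + G.dist u z)) :
    ∃ x y, G.Adj x y ∧ G.dist u x = G.dist u y := by
  induction p with
  | nil => grind
  | @cons a c z h p ih =>
    by_cases heq : G.dist u a = G.dist u c
    · exact ⟨a, c, h, heq⟩
    · apply ih
      rw [Walk.length_cons, Nat.odd_iff] at hp
      rw [Nat.odd_iff]
      rcases h.diff_dist_adj (u := u) with h' | h' | h' <;> omega

lemma exists_adj_dist_eq_of_dist_eq_succ {u x : V} {i : ℕ} (h : G.dist u x = i + 1) :
    ∃ y, G.Adj x y ∧ G.dist u y = i := by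
  obtain ⟨p, hp⟩ := exists_walk_of_dist_ne_zero (G := G) (u := x) (v := u)
    (by rw [SimpleGraph.dist_comm]; omega)
  rw [SimpleGraph.dist_comm, h] at hp
  cases p with
  | nil => simp at hp
  | @cons _ y _ hxy q =>
    have hq : G.dist u y ≤ i := by
      rw [SimpleGraph.dist_comm]
      have := dist_le q
      simp only [Walk.length_cons] at hp
      omega
    refine ⟨y, hxy, ?_⟩
    rcases hxy.diff_dist_adj (u := u) with h' | h' | h' <;> omega

lemma exists_dist_eq_of_le {u z : V} {i : ℕ} (hi : i ≤ G.dist u z) : ∃ x, G.dist u x = i := by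
  induction hk : G.dist u z generalizing z with
  | zero => exact ⟨z, by omega⟩
  | succ k ih =>
    rcases (hk ▸ hi).eq_or_lt with rfl | hlt
    · exact ⟨z, hk⟩
    · obtain ⟨y, -, hy⟩ := exists_adj_dist_eq_of_dist_eq_succ hk
      exact ih (by omega) hy

lemma Set.Nonempty.of_ncard_eq {α : Type*} [Finite α] {s t : Set α} (hs : s.Nonempty)
    (h : s.ncard = t.ncard) : t.Nonempty :=
  Set.nonempty_of_ncard_ne_zero (h ▸ ((Set.ncard_pos s.toFinite).2 hs).ne')

lemma exists_adj_dist_eq_succ_of_intersectionNumbers [Finite V] {d : ℕ} (hdiam : G.diam = d)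
    {b : ℕ → ℕ}
    (hb : ∀ i ≤ d, ∀ u v : V, G.dist u v = i →
      {w : V | G.Adj v w ∧ G.dist u w = i + 1}.ncard = b i)
    {u x : V} (hx : G.dist u x < d) : ∃ y, G.Adj x y ∧ G.dist u y = G.dist u x + 1 := by
  have : Nonempty V := ⟨u⟩
  obtain ⟨u', z, hz⟩ := G.exists_dist_eq_diam
  obtain ⟨x', hx'⟩ :=
    exists_dist_eq_of_le (G := G) (u := u') (z := z) (i := G.dist u x + 1) (by omega)
  obtain ⟨y', hx'y', hy'⟩ := exists_adj_dist_eq_of_dist_eq_succ hx'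
  have hne : {w | G.Adj y' w ∧ G.dist u' w = G.dist u x + 1}.Nonempty := ⟨x', hx'y'.symm, hx'⟩
  exact hne.of_ncard_eq (t := {y | G.Adj x y ∧ G.dist u y = G.dist u x + 1})
    (by rw [hb _ hx.le _ _ hy', hb _ hx.le _ _ rfl])

lemma ncard_adj_dist_eq_of_intersectionNumbers [Finite V] {d : ℕ}
    (hle : ∀ u w : V, G.dist u w ≤ d) {b c : ℕ → ℕ}
    (hb : ∀ i ≤ d, ∀ u v : V, G.dist u v = i →
      {w : V | G.Adj v w ∧ G.dist u w = i + 1}.ncard = b i)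
    (hc : ∀ i ≤ d, ∀ u v : V, G.dist u v = i →
      {w : V | G.Adj v w ∧ G.dist u w = i - 1}.ncard = c i)
    {u x : V} (hx : G.dist u x = d) :
    {y : V | G.Adj x y ∧ G.dist u y = d}.ncard = b 0 - c d := by
  have hdeg : {y : V | G.Adj x y}.ncard = b 0 := by
    simpa using hb 0 (Nat.zero_le d) x x dist_self
  have hsplit : {y : V | G.Adj x y} =
      {y : V | G.Adj x y ∧ G.dist u y = d - 1} ∪ {y : V | G.Adj x y ∧ G.dist u y = d} := by
    ext y
    simp only [Set.mem_ofPred_eq, Set.mem_union]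
    constructor
    · intro hxy
      refine Or.imp (⟨hxy, ·⟩) (⟨hxy, ·⟩) ?_
      have := hle u y
      rcases hxy.diff_dist_adj (u := u) with h | h | h <;> omega
    · rintro (⟨hxy, -⟩ | ⟨hxy, -⟩) <;> exact hxy
  have hdisj : Disjoint {y : V | G.Adj x y ∧ G.dist u y = d - 1}
      {y : V | G.Adj x y ∧ G.dist u y = d} := by
    rw [Set.disjoint_left]
    rintro y ⟨hxy, h₁⟩ ⟨-, h₂⟩
    have := hle x y
    rw [dist_eq_one_iff_adj.2 hxy] at this
    omega
  rw [← hdeg, hsplit, Set.ncard_union_eq hdisj, hc d le_rfl u x hx]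
  omega

lemma exists_adj_dist_eq_of_odd_closed_walk (hconn : G.Connected) {d : ℕ}
    (hodd : ∀ (v : V) (c : G.Walk v v), Odd c.length → 2 * d + 1 ≤ c.length)
    (hle : ∀ u w : V, G.dist u w ≤ d) {v : V} (c : G.Walk v v) (hc : Odd c.length) :
    ∃ x y, G.Adj x y ∧ G.dist v x = d ∧ G.dist v y = d := by
  obtain ⟨x, y, hxy, hxy_dist⟩ := c.exists_adj_dist_eq_dist_of_odd v (by simpa using hc)
  obtain ⟨p, hp⟩ := hconn.exists_walk_length_eq_dist v x
  have := (p.concat hxy).le_length_add_dist_of_odd hodd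
    (by rw [Walk.length_concat, hp, ← hxy_dist]; exact ⟨G.dist v x, by ring⟩)
  rw [Walk.length_concat, hp, ← hxy_dist] at this
  have := hle v x
  exact ⟨x, y, hxy, by omega, by omega⟩

lemma exists_adj_dist_eq_of_intersectionNumbers [Finite V] {d : ℕ}
    (hle : ∀ u w : V, G.dist u w ≤ d) {b c : ℕ → ℕ}
    (hb : ∀ i ≤ d, ∀ u v : V, G.dist u v = i →
      {w : V | G.Adj v w ∧ G.dist u w = i + 1}.ncard = b i)
    (hc : ∀ i ≤ d, ∀ u v : V, G.dist u v = i →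
      {w : V | G.Adj v w ∧ G.dist u w = i - 1}.ncard = c i)
    (h₀ : ∃ u₀ x₀ y₀ : V, G.Adj x₀ y₀ ∧ G.dist u₀ x₀ = d ∧ G.dist u₀ y₀ = d)
    {u x : V} (hx : G.dist u x = d) : ∃ y, G.Adj x y ∧ G.dist u y = d := by
  obtain ⟨u₀, x₀, y₀, hxy₀, hx₀, hy₀⟩ := h₀
  have hne : {y | G.Adj x₀ y ∧ G.dist u₀ y = d}.Nonempty := ⟨y₀, hxy₀, hy₀⟩
  exact hne.of_ncard_eq (t := {y | G.Adj x y ∧ G.dist u y = d}) (by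
    rw [ncard_adj_dist_eq_of_intersectionNumbers hle hb hc hx₀,
      ncard_adj_dist_eq_of_intersectionNumbers hle hb hc hx])

lemma exists_walk_length_eq_two_mul_add_one_sub_dist (hconn : G.Connected) {d : ℕ}
    (hle : ∀ u w : V, G.dist u w ≤ d)
    (hup : ∀ u x : V, G.dist u x < d → ∃ y, G.Adj x y ∧ G.dist u y = G.dist u x + 1)
    (hflat : ∀ u x : V, G.dist u x = d → ∃ y, G.Adj x y ∧ G.dist u y = d) (u w : V) :
    ∃ p : G.Walk u w, p.length = 2 * d + 1 - G.dist u w := by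
  induction hn : d - G.dist u w generalizing w with
  | zero =>
    have hw : G.dist u w = d := le_antisymm (hle u w) (by omega)
    obtain ⟨y, hwy, hy⟩ := hflat u w hw
    obtain ⟨p, hp⟩ := hconn.exists_walk_length_eq_dist u y
    exact ⟨p.concat hwy.symm, by rw [Walk.length_concat, hp, hy, hw]; omega⟩
  | succ n ih =>
    obtain ⟨y, hwy, hy⟩ := hup u w (by omega)
    obtain ⟨p, hp⟩ := ih y (by omega)
    exact ⟨p.concat hwy.symm, by rw [Walk.length_concat, hp, hy]; have := hle u y; omega⟩

def bipartiteDoubleFst : bipartiteDouble G →g G where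
  toFun := Prod.fst
  map_rel' h := h.2

lemma SimpleGraph.Walk.snd_eq_iff_even_length {a b : V × Bool}
    (q : (bipartiteDouble G).Walk a b) : a.2 = b.2 ↔ Even q.length := by
  induction q with
  | nil => simp
  | cons h q ih =>
    rw [Walk.length_cons, Nat.even_add_one, ← ih]
    have key : ∀ x y z : Bool, x ≠ y → (x = z ↔ ¬ y = z) := by decide
    exact key _ _ _ h.1

lemma SimpleGraph.Walk.exists_bipartiteDouble_walk {u w : V} (p : G.Walk u w) {ε δ : Bool}
    (h : ε = δ ↔ Even p.length) :
    ∃ q : (bipartiteDouble G).Walk (u, ε) (w, δ), q.length = p.length := by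
  induction p generalizing ε with
  | nil =>
    obtain rfl : ε = δ := h.2 ⟨0, rfl⟩
    exact ⟨.nil, rfl⟩
  | cons hadj p ih =>
    rw [Walk.length_cons, Nat.even_add_one] at h
    have key : ∀ x y : Bool, (x = y ↔ ¬ Even p.length) → ((!x) = y ↔ Even p.length) := by
      intro x y; cases x <;> cases y <;> simp
    obtain ⟨q, hq⟩ := ih (ε := !ε) (key ε δ h)
    exact ⟨.cons ⟨by simp, hadj⟩ q, congrArg (· + 1) hq⟩

lemma dist_bipartiteDouble_le {u w : V} (p : G.Walk u w) {ε δ : Bool}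
    (h : ε = δ ↔ Even p.length) : (bipartiteDouble G).dist (u, ε) (w, δ) ≤ p.length := by
  obtain ⟨q, hq⟩ := p.exists_bipartiteDouble_walk h
  exact hq ▸ dist_le q

lemma exists_walk_length_eq_dist_bipartiteDouble {u w : V} {ε δ : Bool}
    (h : (bipartiteDouble G).Reachable (u, ε) (w, δ)) :
    ∃ p : G.Walk u w,
      p.length = (bipartiteDouble G).dist (u, ε) (w, δ) ∧ (ε = δ ↔ Even p.length) := by
  obtain ⟨q, hq⟩ := h.exists_walk_length_eq_dist
  have hlen : (q.map bipartiteDoubleFst).length = q.length := q.length_map _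
  exact ⟨q.map bipartiteDoubleFst, hlen.trans hq, hlen ▸ q.snd_eq_iff_even_length⟩

lemma even_dist_bipartiteDouble_iff {a b : V × Bool} (h : (bipartiteDouble G).Reachable a b) :
    Even ((bipartiteDouble G).dist a b) ↔ a.2 = b.2 := by
  obtain ⟨q, hq⟩ := h.exists_walk_length_eq_dist
  rw [← hq, q.snd_eq_iff_even_length]

lemma connected_bipartiteDouble [Nonempty V]
    (h : ∀ u w : V, ∃ p q : G.Walk u w, ¬ (Even p.length ↔ Even q.length)) :
    (bipartiteDouble G).Connected := by
  refine (connected_iff _).2 ⟨?_, inferInstance⟩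
  rintro ⟨u, ε⟩ ⟨w, δ⟩
  obtain ⟨p, q, hpq⟩ := h u w
  by_cases hp : ε = δ ↔ Even p.length
  · obtain ⟨r, -⟩ := p.exists_bipartiteDouble_walk hp
    exact r.reachable
  · obtain ⟨r, -⟩ := q.exists_bipartiteDouble_walk (ε := ε) (δ := δ) (by tauto)
    exact r.reachable

lemma Nat.even_two_mul_add_one_sub_iff {d k : ℕ} (hk : k ≤ 2 * d + 1) :
    Even (2 * d + 1 - k) ↔ ¬ Even k := by
  rw [Nat.even_sub hk]
  simp [parity_simps]

lemma exists_walks_length_parity_ne (hconn : G.Connected) {d : ℕ}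
    (hlong : ∀ u w : V, ∃ p : G.Walk u w, p.length = 2 * d + 1 - G.dist u w) (u w : V) :
    ∃ p q : G.Walk u w, ¬ (Even p.length ↔ Even q.length) := by
  obtain ⟨p, hp⟩ := hconn.exists_walk_length_eq_dist u w
  obtain ⟨q, hq⟩ := hlong u w
  have hk : G.dist u w ≤ 2 * d + 1 := by have := dist_le q; omega
  refine ⟨p, q, ?_⟩
  rw [hp, hq, Nat.even_two_mul_add_one_sub_iff hk]
  tauto

lemma dist_bipartiteDouble_eq (hconn : G.Connected) (hD : (bipartiteDouble G).Connected) {d : ℕ}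
    (hodd : ∀ (v : V) (c : G.Walk v v), Odd c.length → 2 * d + 1 ≤ c.length)
    (hlong : ∀ u w : V, ∃ p : G.Walk u w, p.length = 2 * d + 1 - G.dist u w)
    (u w : V) (ε δ : Bool) :
    (bipartiteDouble G).dist (u, ε) (w, δ) =
      if ε = δ ↔ Even (G.dist u w) then G.dist u w else 2 * d + 1 - G.dist u w := by
  obtain ⟨p, hp, hpar⟩ :=
    exists_walk_length_eq_dist_bipartiteDouble (hD.preconnected (u, ε) (w, δ))
  split_ifs with h
  · obtain ⟨g, hg⟩ := hconn.exists_walk_length_eq_dist u w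
    have := dist_bipartiteDouble_le g (hg ▸ h)
    have := dist_le p
    omega
  · obtain ⟨r, hr⟩ := hlong u w
    have hk : G.dist u w ≤ 2 * d + 1 := by have := dist_le r; omega
    have := dist_bipartiteDouble_le r (ε := ε) (δ := δ)
      (by rw [hr, Nat.even_two_mul_add_one_sub_iff hk]; tauto)
    have := p.le_length_add_dist_of_odd hodd (by
      rw [← Nat.not_even_iff_odd, Nat.even_add]; tauto)
    omega

lemma SimpleGraph.Preconnected.exists_isResolvingSet [Fintype V] (hG : G.Preconnected) :
    ∃ S : Finset V, IsResolvingSet G S :=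
  ⟨Finset.univ, fun u w huw =>
    ⟨u, by simp, by rw [dist_self]; exact ((hG w u).pos_dist_of_ne huw.symm).ne⟩⟩

lemma metricDim_le_of_forall_isResolvingSet {W : Type*} {H : SimpleGraph W}
    (hG : ∃ S : Finset V, IsResolvingSet G S)
    (h : ∀ S : Finset V, IsResolvingSet G S →
      ∃ T : Finset W, IsResolvingSet H T ∧ T.card ≤ S.card) :
    metricDim H ≤ metricDim G := by
  obtain ⟨S₀, hS₀⟩ := hG
  obtain ⟨S, hS, hcard⟩ := Nat.sInf_mem
    (⟨_, S₀, hS₀, rfl⟩ : {n | ∃ S : Finset V, IsResolvingSet G S ∧ S.card = n}.Nonempty)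
  obtain ⟨T, hT, hTS⟩ := h S hS
  calc metricDim H ≤ T.card := Nat.sInf_le ⟨T, hT, rfl⟩
    _ ≤ S.card := hTS
    _ = metricDim G := hcard

lemma IsResolvingSet.image_fst {d : ℕ}
    (hdist : ∀ (u w : V) (ε δ : Bool), (bipartiteDouble G).dist (u, ε) (w, δ) =
      if ε = δ ↔ Even (G.dist u w) then G.dist u w else 2 * d + 1 - G.dist u w)
    {S : Set (V × Bool)} (hS : IsResolvingSet (bipartiteDouble G) S) :
    IsResolvingSet G (Prod.fst '' S) := by
  intro u w huw
  obtain ⟨⟨v, ι⟩, hv, hne⟩ := hS (u, true) (w, true) (by simpa using huw)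
  refine ⟨v, ⟨_, hv, rfl⟩, fun h => hne ?_⟩
  rw [hdist, hdist, h]

lemma IsResolvingSet.image_mk_true [Nontrivial V] (hD : (bipartiteDouble G).Connected)
    {d : ℕ} (hle : ∀ u w : V, G.dist u w ≤ d)
    (hdist : ∀ (u w : V) (ε δ : Bool), (bipartiteDouble G).dist (u, ε) (w, δ) =
      if ε = δ ↔ Even (G.dist u w) then G.dist u w else 2 * d + 1 - G.dist u w)
    {S : Set V} (hS : IsResolvingSet G S) :
    IsResolvingSet (bipartiteDouble G) ((·, true) '' S) := by
  rintro ⟨u, ε⟩ ⟨w, δ⟩ hne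
  by_cases hεδ : ε = δ
  · subst hεδ
    obtain ⟨v, hv, hvuw⟩ := hS u w (by rintro rfl; exact hne rfl)
    refine ⟨(v, true), ⟨v, hv, rfl⟩, fun h => hvuw ?_⟩
    have := hle u v
    have := hle w v
    rw [hdist, hdist] at h
    split_ifs at h <;> omega
  · obtain ⟨x, y, hxy⟩ := exists_pair_ne V
    obtain ⟨v, hv, -⟩ := hS x y hxy
    refine ⟨(v, true), ⟨v, hv, rfl⟩, fun h => hεδ ?_⟩
    have hu := even_dist_bipartiteDouble_iff (hD.preconnected (u, ε) (v, true))
    have hw := even_dist_bipartiteDouble_iff (hD.preconnected (w, δ) (v, true))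
    rw [h] at hu
    exact Bool.eq_iff_iff.2 (hu.symm.trans hw)

lemma metricDim_bipartiteDouble_eq [Fintype V] [Nontrivial V] (hconn : G.Connected)
    (hD : (bipartiteDouble G).Connected) {d : ℕ} (hle : ∀ u w : V, G.dist u w ≤ d)
    (hdist : ∀ (u w : V) (ε δ : Bool), (bipartiteDouble G).dist (u, ε) (w, δ) =
      if ε = δ ↔ Even (G.dist u w) then G.dist u w else 2 * d + 1 - G.dist u w) :
    metricDim (bipartiteDouble G) = metricDim G := by
  classical
  apply le_antisymm
  · refine metricDim_le_of_forall_isResolvingSet hconn.preconnected.exists_isResolvingSet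
      fun S hS => ⟨S.image (·, true), ?_, Finset.card_image_le⟩
    rw [Finset.coe_image]
    exact hS.image_mk_true hD hle hdist
  · refine metricDim_le_of_forall_isResolvingSet hD.preconnected.exists_isResolvingSet
      fun S hS => ⟨S.image Prod.fst, ?_, Finset.card_image_le⟩
    rw [Finset.coe_image]
    exact hS.image_fst hdist

end

/-- Bailey's theorem: if `Γ` is a finite connected distance-regular graph of
diameter `d` whose shortest odd cycle has length `2d+1`, then the bipartite
double `D(Γ)` is connected and has the same metric dimension as `Γ`. -/
theorem bipartiteDouble_metricDim {V : Type*} [Fintype V] (G : SimpleGraph V)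
    (hconn : G.Connected) (d : ℕ) (hdiam : G.diam = d)
    -- distance-regularity: intersection numbers `b i` and `c i`
    (b c : ℕ → ℕ)
    (hb : ∀ i ≤ d, ∀ u v : V, G.dist u v = i →
      {w : V | G.Adj v w ∧ G.dist u w = i + 1}.ncard = b i)
    (hc : ∀ i ≤ d, ∀ u v : V, G.dist u v = i →
      {w : V | G.Adj v w ∧ G.dist u w = i - 1}.ncard = c i)
    -- the shortest odd cycle has length `2d+1`
    (hcycle : ∃ (v : V) (w : G.Walk v v), w.IsCycle ∧ w.length = 2 * d + 1)
    (hmin : ∀ (v : V) (w : G.Walk v v), w.IsCycle → Odd w.length →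
      2 * d + 1 ≤ w.length) :
    (bipartiteDouble G).Connected ∧
      metricDim (bipartiteDouble G) = metricDim G := by
  obtain ⟨v₀, cyc, hcyc, hcyc_len⟩ := hcycle
  have hd : 1 ≤ d := by have := hcyc.three_le_length; omega
  have hle : ∀ u w, G.dist u w ≤ d := fun u w =>
    hdiam ▸ dist_le_diam (ediam_ne_top_of_diam_ne_zero (by omega))
  have hodd : ∀ (v : V) (p : G.Walk v v), Odd p.length → 2 * d + 1 ≤ p.length :=
    fun v p hp => p.le_length_of_odd_of_forall_isCycle hmin hp
  have hflat : ∀ u x : V, G.dist u x = d → ∃ y, G.Adj x y ∧ G.dist u y = d :=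
    fun _ _ => exists_adj_dist_eq_of_intersectionNumbers hle hb hc
      ⟨v₀, exists_adj_dist_eq_of_odd_closed_walk hconn hodd hle cyc ⟨d, hcyc_len⟩⟩
  have hlong := exists_walk_length_eq_two_mul_add_one_sub_dist hconn hle
    (fun _ _ => exists_adj_dist_eq_succ_of_intersectionNumbers hdiam hb) hflat
  have := hconn.nonempty
  have : Nontrivial V := nontrivial_of_diam_ne_zero (by rw [hdiam]; omega)
  have hD := connected_bipartiteDouble (exists_walks_length_parity_ne hconn hlong)
  exact ⟨hD, metricDim_bipartiteDouble_eq hconn hD hle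
    (dist_bipartiteDouble_eq hconn hD hodd hlong)⟩
end

section
/- For every integer n ≥ 3, the metric dimension of the graph K_{n,n} − I, obtained from the complete bipartite graph K_{n,n} by deleting a perfect matching, equals n − 1. -/
/-- The graph `K_{n,n} − I`: the complete bipartite graph on two copies of
`{1,…,n}` with a perfect matching removed.  Vertex `(i,ε)` is adjacent to
`(j,δ)` iff `ε ≠ δ` and `i ≠ j`. -/
def completeBipartiteMinusMatching (n : ℕ) : SimpleGraph (Fin n × Bool) where
  Adj x y := x.2 ≠ y.2 ∧ x.1 ≠ y.1
  symm := ⟨fun x y h => ⟨h.1.symm, h.2.symm⟩⟩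
  loopless := ⟨fun x h => h.1 rfl⟩

/-! The distance in `K_{n,n} − I` between distinct vertices is `1` across the sides, `2` on the
same side and `3` between the two copies `(i,+)`, `(i,−)` of an index. Hence a vertex `v` sees all
vertices `(a,ε)` with `a ≠ v.1` and fixed side `ε` at the same distance: a resolving set must
touch all indices but at most one, so it has at least `n − 1` elements. Conversely the `n − 1`
vertices `(i,+)`, `i ≠ i₀`, resolve the graph: two copies of one index are told apart by any
`(j,+)` with `j` a third index, and two vertices with distinct indices `a ≠ i₀`, `b` by `(a,+)`,
at distance `0` or `3` from `(a,·)` and `1` or `2` from `(b,·)`. -/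

open Finset SimpleGraph

lemma metricDim_eq_of_isResolvingSet {V : Type*} {G : SimpleGraph V} {k : ℕ} (S : Finset V)
    (hS : IsResolvingSet G ↑S) (hcard : S.card = k)
    (hle : ∀ T : Finset V, IsResolvingSet G ↑T → k ≤ T.card) :
    metricDim G = k :=
  le_antisymm (Nat.sInf_le ⟨S, hS, hcard⟩) (le_csInf ⟨k, S, hS, hcard⟩ fun _ ⟨T, hT, hT'⟩ =>
    hT' ▸ hle T hT)

namespace SimpleGraph

variable {V : Type*} {G : SimpleGraph V} {u v w : V}

lemma dist_eq_two_of_adj_of_adj (huv : u ≠ v) (hnadj : ¬G.Adj u v) (huw : G.Adj u w)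
    (hwv : G.Adj w v) : G.dist u v = 2 := by
  rw [dist, edist_eq_two_iff.mpr ⟨huv, hnadj, w, G.mem_commonNeighbors.mpr ⟨huw, hwv.symm⟩⟩]
  rfl

lemma dist_eq_three_of_commonNeighbors_eq_empty (p : G.Walk u v) (hp : p.length = 3)
    (huv : u ≠ v) (hnadj : ¬G.Adj u v) (hcommon : G.commonNeighbors u v = ∅) :
    G.dist u v = 3 := by
  have hle : G.edist u v ≤ 3 := by simpa [hp] using p.edist_le
  have hlt : 2 < G.edist u v := two_lt_edist_iff.mpr ⟨huv, hnadj, hcommon⟩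
  have h3 : G.edist u v = 3 := le_antisymm hle (Order.add_one_le_of_lt hlt)
  rw [dist, h3]
  rfl

end SimpleGraph

namespace completeBipartiteMinusMatching

variable {n : ℕ}

lemma exists_ne_ne (hn : 3 ≤ n) (a b : Fin n) : ∃ c : Fin n, c ≠ a ∧ c ≠ b :=
  ENat.exists_ne_ne_of_three_le (by simpa using hn) a b

lemma dist_of_snd_ne_of_fst_ne {x y : Fin n × Bool} (h2 : x.2 ≠ y.2) (h1 : x.1 ≠ y.1) :
    (completeBipartiteMinusMatching n).dist x y = 1 :=
  dist_eq_one_iff_adj.mpr ⟨h2, h1⟩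

lemma dist_of_snd_eq_of_fst_ne (hn : 3 ≤ n) {x y : Fin n × Bool} (h2 : x.2 = y.2)
    (h1 : x.1 ≠ y.1) : (completeBipartiteMinusMatching n).dist x y = 2 := by
  obtain ⟨c, hcx, hcy⟩ := exists_ne_ne hn x.1 y.1
  exact dist_eq_two_of_adj_of_adj (w := (c, !x.2)) (fun h => h1 (congrArg Prod.fst h))
    (fun h => h.1 h2) ⟨by simp, hcx.symm⟩ ⟨by simp [h2], hcy⟩

lemma dist_of_fst_eq_of_snd_ne (hn : 3 ≤ n) {x y : Fin n × Bool} (h1 : x.1 = y.1)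
    (h2 : x.2 ≠ y.2) : (completeBipartiteMinusMatching n).dist x y = 3 := by
  obtain ⟨a, hax, -⟩ := exists_ne_ne hn x.1 x.1
  obtain ⟨b, hbx, hba⟩ := exists_ne_ne hn x.1 a
  have hxa : (completeBipartiteMinusMatching n).Adj x (a, !x.2) := ⟨by simp, hax.symm⟩
  have hab : (completeBipartiteMinusMatching n).Adj (a, !x.2) (b, x.2) := ⟨by simp, hba.symm⟩
  have hby : (completeBipartiteMinusMatching n).Adj (b, x.2) y := ⟨h2, h1 ▸ hbx⟩
  refine dist_eq_three_of_commonNeighbors_eq_empty (hxa.toWalk.append (hab.toWalk.append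
    hby.toWalk)) rfl (fun h => h2 (congrArg Prod.snd h)) (fun h => h.2 h1) ?_
  -- a common neighbour would lie on a third side
  refine Set.eq_empty_of_forall_notMem fun w hw => ?_
  obtain ⟨⟨hxw, -⟩, hyw, -⟩ := (mem_commonNeighbors _).mp hw
  revert h2 hxw hyw
  cases x.2 <;> cases y.2 <;> cases w.2 <;> simp

lemma dist_eq (hn : 3 ≤ n) (x y : Fin n × Bool) :
    (completeBipartiteMinusMatching n).dist x y =
      if x = y then 0 else if x.1 = y.1 then 3 else if x.2 = y.2 then 2 else 1 := by
  split_ifs with hxy h1 h2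
  · simp [hxy]
  · exact dist_of_fst_eq_of_snd_ne hn h1 fun h2 => hxy (Prod.ext h1 h2)
  · exact dist_of_snd_eq_of_fst_ne hn h2 h1
  · exact dist_of_snd_ne_of_fst_ne h2 h1

lemma dist_eq_of_fst_ne (hn : 3 ≤ n) {a b : Fin n} (ε : Bool) {v : Fin n × Bool}
    (ha : a ≠ v.1) (hb : b ≠ v.1) :
    (completeBipartiteMinusMatching n).dist (a, ε) v =
      (completeBipartiteMinusMatching n).dist (b, ε) v := by
  obtain ⟨c, δ⟩ := v
  simp [dist_eq hn, ha, hb]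

lemma le_card_of_isResolvingSet (hn : 3 ≤ n) {S : Finset (Fin n × Bool)}
    (hS : IsResolvingSet (completeBipartiteMinusMatching n) ↑S) : n - 1 ≤ #S := by
  have hmissed : #(S.image Prod.fst)ᶜ ≤ 1 := card_le_one.mpr fun a ha b hb => by
    by_contra hab
    obtain ⟨v, hv, hd⟩ := hS (a, true) (b, true) (by simpa using hab)
    simp only [mem_compl, mem_image, not_exists, not_and] at ha hb
    exact hd (dist_eq_of_fst_ne hn true (Ne.symm (ha v hv)) (Ne.symm (hb v hv)))
  calc n - 1 ≤ #(S.image Prod.fst) := by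
        rw [card_compl, Fintype.card_fin] at hmissed
        omega
    _ ≤ #S := card_image_le

lemma dist_ne_of_snd_ne (hn : 3 ≤ n) {a j : Fin n} {α β : Bool} (hαβ : α ≠ β) (hja : j ≠ a) :
    (completeBipartiteMinusMatching n).dist (a, α) (j, true) ≠
      (completeBipartiteMinusMatching n).dist (a, β) (j, true) := by
  simp only [dist_eq hn, Prod.mk.injEq, hja.symm, false_and, if_false]
  revert hαβ
  cases α <;> cases β <;> simp

lemma dist_ne_of_fst_ne (hn : 3 ≤ n) {a b : Fin n} (α β : Bool) (hab : a ≠ b) :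
    (completeBipartiteMinusMatching n).dist (a, α) (a, true) ≠
      (completeBipartiteMinusMatching n).dist (b, β) (a, true) := by
  simp only [dist_eq hn, Prod.mk.injEq, hab.symm, false_and, if_false]
  cases α <;> cases β <;> simp

lemma isResolvingSet_map_erase (hn : 3 ≤ n) (i₀ : Fin n) :
    IsResolvingSet (completeBipartiteMinusMatching n)
      ↑((univ.erase i₀).map (Function.Embedding.sectL (Fin n) true)) := by
  rintro ⟨a, α⟩ ⟨b, β⟩ hne
  obtain rfl | hab := eq_or_ne a b
  · obtain ⟨j, hja, hji⟩ := exists_ne_ne hn a i₀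
    exact ⟨(j, true), by simpa using hji, dist_ne_of_snd_ne hn (by simpa using hne) hja⟩
  · obtain hai | rfl := ne_or_eq a i₀
    · exact ⟨(a, true), by simpa using hai, dist_ne_of_fst_ne hn α β hab⟩
    · exact ⟨(b, true), by simpa using hab.symm, (dist_ne_of_fst_ne hn β α hab.symm).symm⟩

end completeBipartiteMinusMatching

theorem metricDim_completeBipartiteMinusMatching (n : ℕ) (hn : 3 ≤ n) :
    metricDim (completeBipartiteMinusMatching n) = n - 1 := by
  open completeBipartiteMinusMatching in
  exact metricDim_eq_of_isResolvingSet _ (isResolvingSet_map_erase hn ⟨0, by omega⟩)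
    (by simp) fun _ hT => le_card_of_isResolvingSet hn hT
end

section
/- The 5-dimensional hypercube Q_5 = H(5,2) has metric dimension 4. -/
/-- The Hamming graph `H(d,q)`: vertices are the d-tuples over an alphabet of
size `q`, adjacent when they differ in exactly one coordinate. -/
def hammingGraph (d q : ℕ) : SimpleGraph (Fin d → Fin q) where
  Adj x y := ∃! i, x i ≠ y i
  symm := ⟨fun x y h => by
    obtain ⟨i, hi, hu⟩ := h
    exact ⟨i, hi.symm, fun j hj => hu j hj.symm⟩⟩
  loopless := ⟨fun x h => by
    obtain ⟨i, hi, -⟩ := h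
    exact hi rfl⟩

section MetricDim

variable {V : Type*} {G : SimpleGraph V}

lemma IsResolvingSet.mono {S T : Set V} (hS : IsResolvingSet G S) (hST : S ⊆ T) :
    IsResolvingSet G T := fun u w huw =>
  let ⟨v, hv, hd⟩ := hS u w huw
  ⟨v, hST hv, hd⟩

lemma metricDim_le_card {S : Finset V} (hS : IsResolvingSet G S) : metricDim G ≤ S.card :=
  Nat.sInf_le ⟨S, hS, rfl⟩

lemma IsResolvingSet.exists_card_eq [Fintype V] {S : Finset V} (hS : IsResolvingSet G S)
    {n : ℕ} (hSn : S.card ≤ n) (hn : n ≤ Fintype.card V) :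
    ∃ T : Finset V, IsResolvingSet G T ∧ T.card = n := by
  obtain ⟨T, hST, hT⟩ := Finset.exists_superset_card_eq hSn hn
  exact ⟨T, hS.mono (Finset.coe_subset.2 hST), hT⟩

lemma metricDim_eq_card [Fintype V] {S : Finset V} (hS : IsResolvingSet G S)
    (hmin : ∀ T : Finset V, T.card + 1 = S.card → ¬ IsResolvingSet G T) :
    metricDim G = S.card := by
  refine le_antisymm (metricDim_le_card hS) (le_csInf ⟨_, S, hS, rfl⟩ ?_)
  rintro _ ⟨T, hT, rfl⟩
  by_contra! hlt
  obtain ⟨T', hT', hcard⟩ :=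
    hT.exists_card_eq (n := S.card - 1) (by omega) ((Nat.sub_le _ _).trans S.card_le_univ)
  exact hmin T' (by omega) hT'

end MetricDim

section HammingGraph

variable {d q : ℕ}

lemma hammingGraph_adj_iff {x y : Fin d → Fin q} :
    (hammingGraph d q).Adj x y ↔ hammingDist x y = 1 :=
  Fintype.existsUnique_iff_card_one _

lemma hammingDist_update_add_one {x y : Fin d → Fin q} {i : Fin d} (hi : x i ≠ y i) :
    hammingDist (Function.update x i (y i)) y + 1 = hammingDist x y := by
  have hfilter : ({j | Function.update x i (y i) j ≠ y j} : Finset (Fin d)) =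
      ({j | x j ≠ y j} : Finset (Fin d)).erase i := by
    ext j
    rcases eq_or_ne j i with rfl | hji <;> simp [Function.update_of_ne, *]
  rw [hammingDist, hammingDist, hfilter, Finset.card_erase_add_one (by simpa using hi)]

lemma hammingGraph_adj_update {x : Fin d → Fin q} {i : Fin d} {a : Fin q} (ha : x i ≠ a) :
    (hammingGraph d q).Adj x (Function.update x i a) :=
  ⟨i, by simpa using ha, fun j hj => by_contra fun hji => hj (by simp [hji])⟩

lemma hammingGraph_exists_walk_length_eq (x y : Fin d → Fin q) :
    ∃ p : (hammingGraph d q).Walk x y, p.length = hammingDist x y := by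
  induction h : hammingDist x y generalizing x with
  | zero =>
    obtain rfl := hammingDist_eq_zero.1 h
    exact ⟨.nil, rfl⟩
  | succ n ih =>
    have hxy : x ≠ y := hammingDist_ne_zero.1 (by omega)
    obtain ⟨i, hi⟩ := Function.ne_iff.1 hxy
    obtain ⟨p, hp⟩ := ih (Function.update x i (y i)) (by
      have := hammingDist_update_add_one hi; omega)
    exact ⟨.cons (hammingGraph_adj_update hi) p, by simp [hp]⟩

lemma hammingDist_le_length {x y : Fin d → Fin q} (p : (hammingGraph d q).Walk x y) :
    hammingDist x y ≤ p.length := by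
  induction p with
  | nil => simp
  | @cons u v w huv p ih =>
    calc hammingDist u w ≤ hammingDist u v + hammingDist v w := hammingDist_triangle _ _ _
      _ ≤ p.length + 1 := by rw [hammingGraph_adj_iff.1 huv]; omega
      _ = (p.cons huv).length := (SimpleGraph.Walk.length_cons _ _).symm

lemma hammingGraph_dist (x y : Fin d → Fin q) :
    (hammingGraph d q).dist x y = hammingDist x y := by
  obtain ⟨p, hp⟩ := hammingGraph_exists_walk_length_eq x y
  obtain ⟨p', hp'⟩ := SimpleGraph.Reachable.exists_walk_length_eq_dist ⟨p⟩
  exact le_antisymm (hp ▸ SimpleGraph.dist_le p) (hp' ▸ hammingDist_le_length p')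

lemma isResolvingSet_hammingGraph_iff {S : Set (Fin d → Fin q)} :
    IsResolvingSet (hammingGraph d q) S ↔
      ∀ u w, u ≠ w → ∃ v ∈ S, hammingDist u v ≠ hammingDist w v := by
  simp only [IsResolvingSet, hammingGraph_dist]

lemma hammingDist_add_right [NeZero q] (x y t : Fin d → Fin q) :
    hammingDist (x + t) (y + t) = hammingDist x y :=
  hammingDist_comp (fun i a => a + t i) fun _ => add_left_injective _

lemma IsResolvingSet.image_add_right [NeZero q] {S : Set (Fin d → Fin q)}
    (hS : IsResolvingSet (hammingGraph d q) S) (t : Fin d → Fin q) :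
    IsResolvingSet (hammingGraph d q) ((· + t) '' S) := by
  rw [isResolvingSet_hammingGraph_iff] at hS ⊢
  intro u w huw
  obtain ⟨v, hv, hd⟩ := hS (u - t) (w - t) (sub_left_injective.ne huw)
  refine ⟨v + t, Set.mem_image_of_mem _ hv, ?_⟩
  rwa [← sub_add_cancel u t, ← sub_add_cancel w t, hammingDist_add_right,
    hammingDist_add_right]

end HammingGraph

lemma hypercube5_isResolvingSet :
    IsResolvingSet (hammingGraph 5 2)
      ↑({![0,0,0,0,0], ![0,0,0,1,1], ![0,0,1,0,1], ![0,1,0,0,1]} : Finset (Fin 5 → Fin 2)) := by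
  rw [isResolvingSet_hammingGraph_iff]
  decide

set_option maxHeartbeats 4000000 in
lemma hypercube5_exists_unresolved (b c : Fin 5 → Fin 2) :
    ∃ u w : Fin 5 → Fin 2, u ≠ w ∧ hammingDist u 0 = hammingDist w 0 ∧
      hammingDist u b = hammingDist w b ∧ hammingDist u c = hammingDist w c := by
  revert b c
  decide

lemma hypercube5_not_isResolvingSet_of_card_eq_three {T : Finset (Fin 5 → Fin 2)}
    (hT : T.card = 3) : ¬ IsResolvingSet (hammingGraph 5 2) T := by
  obtain ⟨a, b, c, -, -, -, rfl⟩ := Finset.card_eq_three.1 hT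
  intro hres
  have hres' := hres.image_add_right (-a)
  simp only [Finset.coe_insert, Finset.coe_singleton, Set.image_insert_eq, Set.image_singleton,
    add_neg_cancel, isResolvingSet_hammingGraph_iff] at hres'
  obtain ⟨u, w, huw, h0, hb, hc⟩ := hypercube5_exists_unresolved (b + -a) (c + -a)
  obtain ⟨v, hv, hd⟩ := hres' u w huw
  rcases hv with rfl | rfl | rfl <;> contradiction

theorem metricDim_hypercube5 :
    metricDim (hammingGraph 5 2) = 4 := by
  rw [metricDim_eq_card hypercube5_isResolvingSet fun T hT =>
    hypercube5_not_isResolvingSet_of_card_eq_three (by simpa using hT)]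
  decide
end
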